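/- arXiv:2312.15925 — 7 statements merged into one kernel-verified Lean document; each statement's English description precedes it below -/
import Mathlib

section
/- Kalman controllability criterion: Let n, m ≥ 1, let A be an n×n real matrix, B an n×m real matrix, let T > 0, x₀ ∈ ℝⁿ, and let r : [0,T] → ℝⁿ be integrable. The end-point map u ↦ e^{TA}x₀ + ∫₀^T e^{(T−t)A}(B u(t) + r(t)) dt, defined on the set of measurable essentially bounded functions u : [0,T] → ℝᵐ, is surjective onto ℝⁿ if and only if the Kalman matrix K(A,B) has rank n. In particular, controllability in this sense does not depend on T, on x₀, or on r. -/
open MeasureTheory Matrix Set NormedSpace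

/-- The Kalman matrix `K(A,B) = (B, AB, …, A^{n−1}B)` of the pair `(A,B)`. -/
noncomputable def kalmanMatrix {n m : ℕ} (A : Matrix (Fin n) (Fin n) ℝ)
    (B : Matrix (Fin n) (Fin m) ℝ) : Matrix (Fin n) (Fin n × Fin m) ℝ :=
  Matrix.of fun i p => (A ^ (p.1 : ℕ) * B) i p.2

/-- A control `u : [0,T] → ℝᵐ` is admissible if it is measurable and essentially bounded
on `[0,T]`. -/
def AdmissibleControl {m : ℕ} (T : ℝ) (u : ℝ → Fin m → ℝ) : Prop :=
  AEStronglyMeasurable u (volume.restrict (Set.Icc 0 T)) ∧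
    ∃ C : ℝ, ∀ᵐ t ∂volume.restrict (Set.Icc 0 T), ‖u t‖ ≤ C

namespace KalmanProof

attribute [local instance] Matrix.linftyOpNormedAddCommGroup Matrix.linftyOpNormedSpace
  Matrix.linftyOpNormedRing Matrix.linftyOpNormedAlgebra

variable {n m : ℕ}

/-- The map `M ↦ φ ᵥ* (M * B)` as a continuous linear map on matrices. -/
noncomputable def kalCLM (φ : Fin n → ℝ) (B : Matrix (Fin n) (Fin m) ℝ) :
    Matrix (Fin n) (Fin n) ℝ →L[ℝ] (Fin m → ℝ) :=
  LinearMap.toContinuousLinearMap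
    { toFun := fun M => φ ᵥ* (M * B)
      map_add' := fun M N => by
        show φ ᵥ* ((M + N) * B) = φ ᵥ* (M * B) + φ ᵥ* (N * B)
        rw [Matrix.add_mul, Matrix.vecMul_add]
      map_smul' := fun c M => by
        show φ ᵥ* ((c • M) * B) = c • (φ ᵥ* (M * B))
        rw [Matrix.smul_mul]
        funext j
        simp only [Matrix.vecMul, dotProduct, Matrix.smul_apply, smul_eq_mul, Pi.smul_apply]
        rw [Finset.mul_sum]
        exact Finset.sum_congr rfl fun i _ => by ring }

@[simp] lemma kalCLM_apply (φ : Fin n → ℝ) (B : Matrix (Fin n) (Fin m) ℝ)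
    (M : Matrix (Fin n) (Fin n) ℝ) : kalCLM φ B M = φ ᵥ* (M * B) := rfl

/-- Cayley–Hamilton extension: orthogonality to the first `n` blocks gives all blocks. -/
lemma vecMul_pow_mul_eq_zero (A : Matrix (Fin n) (Fin n) ℝ) (B : Matrix (Fin n) (Fin m) ℝ)
    (φ : Fin n → ℝ) (h : ∀ k < n, φ ᵥ* (A ^ k * B) = 0) : ∀ k, φ ᵥ* (A ^ k * B) = 0 := by
  have hc : A.charpoly.coeff n = 1 := by
    have h1 := (Matrix.charpoly_monic A).coeff_natDegree
    rwa [Matrix.charpoly_natDegree_eq_dim, Fintype.card_fin] at h1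
  have hA : A ^ n = ∑ i ∈ Finset.range n, (-(A.charpoly.coeff i)) • A ^ i := by
    have h0 := Matrix.aeval_self_charpoly A
    rw [Polynomial.aeval_eq_sum_range, Matrix.charpoly_natDegree_eq_dim, Fintype.card_fin,
      Finset.sum_range_succ, hc, one_smul] at h0
    have h2 : A ^ n = -∑ i ∈ Finset.range n, A.charpoly.coeff i • A ^ i :=
      eq_neg_of_add_eq_zero_right h0
    rw [h2, ← Finset.sum_neg_distrib]
    exact Finset.sum_congr rfl fun i _ => (neg_smul _ _).symm
  intro k
  induction k using Nat.strong_induction_on with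
  | _ k ih =>
    by_cases hk : k < n
    · exact h k hk
    · push_neg at hk
      obtain ⟨j, rfl⟩ : ∃ j, k = j + n := ⟨k - n, (Nat.sub_add_cancel hk).symm⟩
      have hpow : A ^ (j + n) = ∑ i ∈ Finset.range n, (-(A.charpoly.coeff i)) • A ^ (j + i) := by
        rw [pow_add, hA, Finset.mul_sum]
        exact Finset.sum_congr rfl fun i _ => by
          rw [mul_smul_comm, ← pow_add]
      have heq : φ ᵥ* (A ^ (j + n) * B) = kalCLM φ B (A ^ (j + n)) := rfl
      rw [heq, hpow, map_sum]
      refine Finset.sum_eq_zero fun i hi => ?_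
      have hi' : j + i < j + n := by have := Finset.mem_range.mp hi; omega
      rw [_root_.map_smul, kalCLM_apply, ih _ hi', smul_zero]

/-- If `φ` kills all blocks `AᵏB` then it kills `e^{sA}B`. -/
lemma vecMul_exp_mul_eq_zero (A : Matrix (Fin n) (Fin n) ℝ) (B : Matrix (Fin n) (Fin m) ℝ)
    (φ : Fin n → ℝ) (h : ∀ k, φ ᵥ* (A ^ k * B) = 0) (s : ℝ) :
    φ ᵥ* (exp (s • A) * B) = 0 := by
  have : φ ᵥ* (exp (s • A) * B) = kalCLM φ B (exp (s • A)) := rfl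
  rw [this, exp_eq_tsum ℝ]
  rw [(kalCLM φ B).map_tsum (expSeries_summable' (𝕂 := ℝ) (s • A))]
  convert tsum_zero with k
  rw [_root_.map_smul, kalCLM_apply, smul_pow]
  have : (s ^ k • A ^ k) * B = s ^ k • (A ^ k * B) := Matrix.smul_mul _ _ _
  rw [this]
  have h2 : φ ᵥ* (s ^ k • (A ^ k * B)) = s ^ k • (φ ᵥ* (A ^ k * B)) := by
    funext j
    simp only [Matrix.vecMul, dotProduct, Matrix.smul_apply, smul_eq_mul, Pi.smul_apply]
    rw [Finset.mul_sum]
    exact Finset.sum_congr rfl fun i _ => by ring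
  rw [h2, h k, smul_zero, smul_zero]

/-- If `φ` kills `e^{sA}B` for `s ∈ [0,T]` then it kills all blocks `AᵏB`. -/
lemma vecMul_pow_mul_eq_zero_of_exp (A : Matrix (Fin n) (Fin n) ℝ)
    (B : Matrix (Fin n) (Fin m) ℝ) (φ : Fin n → ℝ) {T : ℝ} (hT : 0 < T)
    (h : ∀ s ∈ Icc (0 : ℝ) T, φ ᵥ* (exp (s • A) * B) = 0) :
    ∀ k, φ ᵥ* (A ^ k * B) = 0 := by
  set F : ℕ → ℝ → (Fin m → ℝ) := fun k s => kalCLM (φ ᵥ* A ^ k) B (exp (s • A)) with hF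
  have hcont : ∀ k, Continuous (F k) := fun k =>
    (kalCLM _ B).continuous.comp
      (exp_continuous.comp (continuous_id.smul continuous_const))
  have hderiv : ∀ k s, HasDerivAt (F k) (F (k + 1) s) s := by
    intro k s
    have h1 : HasDerivAt (fun u : ℝ => exp (u • A)) (A * exp (s • A)) s :=
      hasDerivAt_exp_smul_const' A s
    have h2 := ((kalCLM (φ ᵥ* A ^ k) B).hasFDerivAt.comp_hasDerivAt s h1)
    refine h2.congr_deriv (Eq.symm ?_)
    show kalCLM (φ ᵥ* A ^ (k + 1)) B (exp (s • A)) = _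
    simp only [kalCLM_apply, Matrix.vecMul_vecMul, pow_succ, Matrix.mul_assoc]
    show _ = (φ ᵥ* A ^ k) ᵥ* ((A * exp (s • A)) * B)
    simp only [Matrix.vecMul_vecMul, Matrix.mul_assoc]
  have hzero : ∀ k, ∀ s ∈ Icc (0 : ℝ) T, F k s = 0 := by
    intro k
    induction k with
    | zero =>
      intro s hs
      show kalCLM (φ ᵥ* A ^ 0) B (exp (s • A)) = 0
      rw [pow_zero, Matrix.vecMul_one, kalCLM_apply]
      exact h s hs
    | succ k ihk =>
      have hIoo : ∀ s ∈ Ioo (0 : ℝ) T, F (k + 1) s = 0 := by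
        intro s hs
        have hev : F k =ᶠ[nhds s] fun _ => 0 := by
          filter_upwards [Ioo_mem_nhds hs.1 hs.2] with t ht
          exact ihk t (Ioo_subset_Icc_self ht)
        have h1 : HasDerivAt (fun _ : ℝ => (0 : Fin m → ℝ)) (F (k + 1) s) s :=
          (Filter.EventuallyEq.hasDerivAt_iff hev).mp (hderiv k s)
        exact h1.unique (hasDerivAt_const s 0)
      have heqon : EqOn (F (k + 1)) (fun _ => 0) (Ioo (0 : ℝ) T) := fun s hs => hIoo s hs
      have hclos := heqon.closure (hcont (k + 1)) continuous_const
      rw [closure_Ioo hT.ne] at hclos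
      exact fun s hs => hclos hs
  intro k
  have h0 := hzero k 0 (left_mem_Icc.mpr hT.le)
  rw [hF] at h0
  simp only [zero_smul, exp_zero, kalCLM_apply, Matrix.one_mul] at h0
  rwa [Matrix.vecMul_vecMul] at h0

/-- Nonzero functional vanishing on a proper submodule of `ℝⁿ`. -/
lemma exists_dot_ne_zero (R : Submodule ℝ (Fin n → ℝ)) (hR : R ≠ ⊤) :
    ∃ φ : Fin n → ℝ, φ ≠ 0 ∧ ∀ x ∈ R, φ ⬝ᵥ x = 0 := by
  obtain ⟨f, hf0, hf⟩ :=
    R.exists_dual_map_eq_bot_of_lt_top (lt_top_iff_ne_top.mpr hR) inferInstance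
  set φ : Fin n → ℝ := fun i => f fun j => if i = j then 1 else 0 with hφ
  have key : ∀ x, f x = φ ⬝ᵥ x := by
    intro x
    conv_lhs => rw [pi_eq_sum_univ x]
    rw [map_sum]
    simp only [_root_.map_smul, smul_eq_mul]
    exact Finset.sum_congr rfl fun i _ => mul_comm _ _
  refine ⟨φ, ?_, ?_⟩
  · intro hφ0
    refine hf0 (LinearMap.ext fun x => ?_)
    rw [key x, hφ0, zero_dotProduct, LinearMap.zero_apply]
  · intro x hx
    rw [← key x]
    have : f x ∈ Submodule.map f R := ⟨x, hx, rfl⟩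
    rw [hf] at this
    simpa using this

lemma vecMul_kalman_apply (A : Matrix (Fin n) (Fin n) ℝ) (B : Matrix (Fin n) (Fin m) ℝ)
    (φ : Fin n → ℝ) (p : Fin n × Fin m) :
    (φ ᵥ* kalmanMatrix A B) p = (φ ᵥ* (A ^ (p.1 : ℕ) * B)) p.2 := rfl

/-- The Kalman rank condition as an orthogonality statement. -/
lemma kalman_rank_iff (A : Matrix (Fin n) (Fin n) ℝ) (B : Matrix (Fin n) (Fin m) ℝ) :
    (kalmanMatrix A B).rank = n ↔
      ∀ φ : Fin n → ℝ, (∀ k, φ ᵥ* (A ^ k * B) = 0) → φ = 0 := by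
  have hfr : Module.finrank ℝ (Fin n → ℝ) = n := by
    rw [Module.finrank_pi, Fintype.card_fin]
  constructor
  · intro hrank φ hφ
    have htop : LinearMap.range (kalmanMatrix A B).mulVecLin = ⊤ := by
      apply Submodule.eq_top_of_finrank_eq
      rw [hfr]; exact hrank
    have hperp : ∀ x : Fin n → ℝ, φ ⬝ᵥ x = 0 := by
      intro x
      have hx : x ∈ LinearMap.range (kalmanMatrix A B).mulVecLin := htop ▸ Submodule.mem_top
      obtain ⟨y, rfl⟩ := hx
      rw [Matrix.mulVecLin_apply, Matrix.dotProduct_mulVec]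
      have hzero : φ ᵥ* kalmanMatrix A B = 0 := by
        funext p
        rw [vecMul_kalman_apply, hφ]
        rfl
      rw [hzero, zero_dotProduct]
    exact (dotProduct_self_eq_zero).mp (hperp φ)
  · intro hperp
    by_contra hrank
    have hne : LinearMap.range (kalmanMatrix A B).mulVecLin ≠ ⊤ := by
      intro htop
      apply hrank
      rw [Matrix.rank, htop, finrank_top, hfr]
    obtain ⟨φ, hφ0, hφ⟩ := exists_dot_ne_zero _ hne
    apply hφ0
    apply hperp
    apply vecMul_pow_mul_eq_zero A B φ
    intro k hk
    funext j
    have h1 := hφ (kalmanMatrix A B *ᵥ Pi.single (⟨k, hk⟩, j) 1)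
      ⟨Pi.single (⟨k, hk⟩, j) 1, rfl⟩
    rw [Matrix.dotProduct_mulVec] at h1
    have h2 : (φ ᵥ* kalmanMatrix A B) ⬝ᵥ Pi.single (⟨k, hk⟩, j) 1 =
        (φ ᵥ* kalmanMatrix A B) (⟨k, hk⟩, j) := by
      rw [dotProduct_single, mul_one]
    rw [h2] at h1
    exact h1

section Integrability

/-- Multiplication by a continuous matrix preserves integrability on `[0,T]`. -/
lemma integrableOn_mulVec {l : ℕ} {T : ℝ} {M : ℝ → Matrix (Fin n) (Fin l) ℝ}
    (hM : Continuous M) {v : ℝ → Fin l → ℝ} (hv : IntegrableOn v (Icc 0 T)) :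
    IntegrableOn (fun t => M t *ᵥ v t) (Icc 0 T) := by
  obtain ⟨C, hC⟩ := isCompact_Icc.exists_bound_of_continuousOn hM.continuousOn
  haveI : TopologicalSpace.PseudoMetrizableSpace (Matrix (Fin n) (Fin l) ℝ) :=
    inferInstanceAs (TopologicalSpace.PseudoMetrizableSpace (Fin n → Fin l → ℝ))
  have hmeas : AEStronglyMeasurable (fun t => M t *ᵥ v t) (volume.restrict (Icc 0 T)) :=
    (Continuous.matrix_mulVec continuous_fst continuous_snd).comp_aestronglyMeasurable
      (hM.aestronglyMeasurable.prodMk hv.aestronglyMeasurable)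
  refine Integrable.mono' (hv.norm.const_mul C) hmeas ?_
  filter_upwards [ae_restrict_mem measurableSet_Icc] with t ht
  calc ‖M t *ᵥ v t‖ ≤ ‖M t‖ * ‖v t‖ := Matrix.linfty_opNorm_mulVec _ _
  _ ≤ C * ‖v t‖ := mul_le_mul_of_nonneg_right (hC t ht) (norm_nonneg _)

lemma integrableOn_of_bounded {l : ℕ} {T : ℝ} {v : ℝ → Fin l → ℝ}
    (hv : AEStronglyMeasurable v (volume.restrict (Icc 0 T)))
    (hC : ∃ C, ∀ᵐ t ∂volume.restrict (Icc 0 T), ‖v t‖ ≤ C) :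
    IntegrableOn v (Icc 0 T) := by
  obtain ⟨C, hC⟩ := hC
  exact Integrable.mono'
    (integrableOn_const (C := C) measure_Icc_lt_top.ne) hv hC

lemma integrableOn_Bu {T : ℝ} (B : Matrix (Fin n) (Fin m) ℝ) {u : ℝ → Fin m → ℝ}
    (hu : AdmissibleControl T u) :
    IntegrableOn (fun t => B *ᵥ u t) (Icc 0 T) := by
  apply integrableOn_of_bounded
  · exact (Continuous.matrix_mulVec continuous_const continuous_id).comp_aestronglyMeasurable hu.1
  · obtain ⟨C, hC⟩ := hu.2
    refine ⟨‖B‖ * C, ?_⟩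
    filter_upwards [hC] with t ht
    calc ‖B *ᵥ u t‖ ≤ ‖B‖ * ‖u t‖ := Matrix.linfty_opNorm_mulVec _ _
    _ ≤ ‖B‖ * C := mul_le_mul_of_nonneg_left ht (norm_nonneg _)

end Integrability


/-- Pairing with `φ` as a continuous linear map. -/
noncomputable def dotCLM (φ : Fin n → ℝ) : (Fin n → ℝ) →L[ℝ] ℝ :=
  LinearMap.toContinuousLinearMap
    { toFun := fun x => φ ⬝ᵥ x
      map_add' := fun x y => dotProduct_add φ x y
      map_smul' := fun c x => by
        show φ ⬝ᵥ (c • x) = c • (φ ⬝ᵥ x)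
        rw [dotProduct_smul] }

@[simp] lemma dotCLM_apply (φ x : Fin n → ℝ) : dotCLM φ x = φ ⬝ᵥ x := rfl

lemma continuous_expE (A : Matrix (Fin n) (Fin n) ℝ) (T : ℝ) :
    Continuous fun t : ℝ => exp ((T - t) • A) :=
  exp_continuous.comp ((continuous_const.sub continuous_id).smul continuous_const)

lemma integrableOn_ctrl {T : ℝ} (A : Matrix (Fin n) (Fin n) ℝ) (B : Matrix (Fin n) (Fin m) ℝ)
    {u : ℝ → Fin m → ℝ} (hu : AdmissibleControl T u) :
    IntegrableOn (fun t => exp ((T - t) • A) *ᵥ (B *ᵥ u t)) (Icc 0 T) :=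
  integrableOn_mulVec (continuous_expE A T) (integrableOn_Bu B hu)

/-- The set of states reachable (from `0`, with `r = 0`) is a submodule. -/
noncomputable def reachSet (A : Matrix (Fin n) (Fin n) ℝ) (B : Matrix (Fin n) (Fin m) ℝ)
    (T : ℝ) : Submodule ℝ (Fin n → ℝ) where
  carrier := {x | ∃ u : ℝ → Fin m → ℝ, AdmissibleControl T u ∧
      (∫ t in Icc (0:ℝ) T, exp ((T - t) • A) *ᵥ (B *ᵥ u t)) = x}
  add_mem' := by
    rintro x y ⟨u, hu, rfl⟩ ⟨v, hv, rfl⟩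
    refine ⟨u + v, ⟨hu.1.add hv.1, ?_⟩, ?_⟩
    · obtain ⟨C, hC⟩ := hu.2; obtain ⟨D, hD⟩ := hv.2
      refine ⟨C + D, ?_⟩
      filter_upwards [hC, hD] with t h1 h2
      exact (norm_add_le _ _).trans (add_le_add h1 h2)
    · rw [← integral_add (integrableOn_ctrl A B hu) (integrableOn_ctrl A B hv)]
      congr 1; funext t
      simp [Matrix.mulVec_add]
  zero_mem' := by
    refine ⟨0, ⟨aestronglyMeasurable_const, ⟨0, Filter.Eventually.of_forall fun t => by simp⟩⟩, ?_⟩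
    simp
  smul_mem' := by
    rintro c x ⟨u, hu, rfl⟩
    refine ⟨c • u, ⟨hu.1.const_smul c, ?_⟩, ?_⟩
    · obtain ⟨C, hC⟩ := hu.2
      refine ⟨|c| * C, ?_⟩
      filter_upwards [hC] with t h1
      simpa [norm_smul] using mul_le_mul_of_nonneg_left h1 (abs_nonneg c)
    · rw [← integral_smul]
      congr 1; funext t
      simp [Matrix.mulVec_smul]

end KalmanProof


open KalmanProof

/-- **Kalman controllability criterion**: for the autonomous linear control system
`ẋ = Ax + Bu + r(t)` in `ℝⁿ`, with `T > 0`, `x₀ ∈ ℝⁿ` and `r` integrable on `[0,T]`,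
the end-point map `u ↦ e^{TA}x₀ + ∫₀^T e^{(T−t)A}(Bu(t) + r(t)) dt`, defined on
measurable essentially bounded controls, is surjective onto `ℝⁿ` if and only if the
Kalman matrix `K(A,B)` has rank `n`. -/
theorem kalman_controllability {n m : ℕ} (hn : 1 ≤ n) (hm : 1 ≤ m)
    (A : Matrix (Fin n) (Fin n) ℝ) (B : Matrix (Fin n) (Fin m) ℝ)
    (T : ℝ) (hT : 0 < T) (x₀ : Fin n → ℝ)
    (r : ℝ → Fin n → ℝ) (hr : IntegrableOn r (Set.Icc 0 T)) :
    (∀ x₁ : Fin n → ℝ, ∃ u : ℝ → Fin m → ℝ, AdmissibleControl T u ∧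
        exp (T • A) *ᵥ x₀ +
          (∫ t in (0:ℝ)..T, exp ((T - t) • A) *ᵥ (B *ᵥ u t + r t)) = x₁) ↔
      (kalmanMatrix A B).rank = n := by
  classical
  set E : ℝ → Matrix (Fin n) (Fin n) ℝ := fun t => exp ((T - t) • A) with hE
  have hEcont : Continuous E := continuous_expE A T
  have hIr : IntegrableOn (fun t => E t *ᵥ r t) (Icc 0 T) := integrableOn_mulVec hEcont hr
  set c₀ : Fin n → ℝ := exp (T • A) *ᵥ x₀ + ∫ t in Icc (0:ℝ) T, E t *ᵥ r t with hc₀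
  have hend : ∀ u : ℝ → Fin m → ℝ, AdmissibleControl T u →
      exp (T • A) *ᵥ x₀ + (∫ t in (0:ℝ)..T, E t *ᵥ (B *ᵥ u t + r t))
        = c₀ + ∫ t in Icc (0:ℝ) T, E t *ᵥ (B *ᵥ u t) := by
    intro u hu
    rw [intervalIntegral.integral_of_le hT.le, ← integral_Icc_eq_integral_Ioc]
    have hsplit : (∫ t in Icc (0:ℝ) T, E t *ᵥ (B *ᵥ u t + r t))
        = (∫ t in Icc (0:ℝ) T, E t *ᵥ (B *ᵥ u t)) + ∫ t in Icc (0:ℝ) T, E t *ᵥ r t := by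
      rw [← integral_add (integrableOn_ctrl A B hu) hIr]
      congr 1; funext t; rw [Matrix.mulVec_add]
    rw [hsplit, hc₀]
    abel
  constructor
  · -- surjectivity implies the rank condition
    intro hsurj
    rw [kalman_rank_iff]
    intro φ hφ
    by_contra hφ0
    have hKs : ∀ s : ℝ, φ ᵥ* (exp (s • A) * B) = 0 := vecMul_exp_mul_eq_zero A B φ hφ
    have hdot : φ ⬝ᵥ φ ≠ 0 := fun h0 => hφ0 (dotProduct_self_eq_zero.mp h0)
    obtain ⟨u, hu, hux⟩ := hsurj (c₀ + (φ ⬝ᵥ φ)⁻¹ • φ)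
    rw [hend u hu] at hux
    have h1 := congrArg (fun x => φ ⬝ᵥ x) hux
    rw [hc₀] at h1
    simp only [dotProduct_add] at h1
    have h2 : φ ⬝ᵥ (∫ t in Icc (0:ℝ) T, E t *ᵥ (B *ᵥ u t)) = 0 := by
      have hpt : ∀ t, dotCLM φ (E t *ᵥ (B *ᵥ u t)) = 0 := by
        intro t
        rw [dotCLM_apply, Matrix.mulVec_mulVec, Matrix.dotProduct_mulVec, hKs (T - t),
          zero_dotProduct]
      have hcomm := (dotCLM φ).integral_comp_comm (integrableOn_ctrl (T := T) A B hu)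
      have heq : (∫ t in Icc (0:ℝ) T, dotCLM φ (E t *ᵥ (B *ᵥ u t)))
          = dotCLM φ (∫ t in Icc (0:ℝ) T, E t *ᵥ (B *ᵥ u t)) := hcomm
      rw [← dotCLM_apply, ← heq]
      simp only [hpt, integral_zero]
    have h3 : φ ⬝ᵥ ((φ ⬝ᵥ φ)⁻¹ • φ) = 1 := by
      rw [dotProduct_smul, smul_eq_mul, inv_mul_cancel₀ hdot]
    rw [h2, h3] at h1
    linarith
  · -- the rank condition implies surjectivity
    intro hrank x₁
    have htop : reachSet A B T = ⊤ := by
      by_contra hne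
      obtain ⟨φ, hφ0, hφ⟩ := exists_dot_ne_zero _ hne
      set g : ℝ → Fin m → ℝ := fun t => (E t * B)ᵀ *ᵥ φ with hg
      have hgcont : Continuous g :=
        Continuous.matrix_mulVec ((hEcont.matrix_mul continuous_const).matrix_transpose)
          continuous_const
      have hadm : AdmissibleControl T g := by
        refine ⟨hgcont.aestronglyMeasurable, ?_⟩
        obtain ⟨C, hC⟩ := isCompact_Icc.exists_bound_of_continuousOn hgcont.continuousOn
        exact ⟨C, (ae_restrict_mem measurableSet_Icc).mono hC⟩
      have hmem : (∫ t in Icc (0:ℝ) T, E t *ᵥ (B *ᵥ g t)) ∈ reachSet A B T := ⟨g, hadm, rfl⟩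
      have h0 := hφ _ hmem
      have hpt : ∀ t, φ ⬝ᵥ (E t *ᵥ (B *ᵥ g t)) = g t ⬝ᵥ g t := by
        intro t
        have hgt : g t = φ ᵥ* (E t * B) := Matrix.mulVec_transpose _ _
        rw [Matrix.mulVec_mulVec, Matrix.dotProduct_mulVec, ← hgt]
      have hint0 : (∫ t in Icc (0:ℝ) T, g t ⬝ᵥ g t) = 0 := by
        calc (∫ t in Icc (0:ℝ) T, g t ⬝ᵥ g t)
            = ∫ t in Icc (0:ℝ) T, dotCLM φ (E t *ᵥ (B *ᵥ g t)) := by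
              congr 1; funext t; rw [dotCLM_apply, hpt]
          _ = dotCLM φ (∫ t in Icc (0:ℝ) T, E t *ᵥ (B *ᵥ g t)) :=
              (dotCLM φ).integral_comp_comm (integrableOn_ctrl A B hadm)
          _ = 0 := h0
      have hic : Continuous fun t => g t ⬝ᵥ g t := hgcont.dotProduct hgcont
      have hgg : ∀ t ∈ Icc (0:ℝ) T, g t ⬝ᵥ g t = 0 := by
        have hnonneg : (0 : ℝ → ℝ) ≤ fun t => g t ⬝ᵥ g t := fun t =>
          Finset.sum_nonneg fun i _ => mul_self_nonneg _
        have hInt : IntegrableOn (fun t => g t ⬝ᵥ g t) (Icc 0 T) := hic.integrableOn_Icc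
        have hae : (fun t => g t ⬝ᵥ g t) =ᵐ[volume.restrict (Icc (0:ℝ) T)] 0 :=
          (integral_eq_zero_iff_of_nonneg hnonneg hInt).mp hint0
        have hsub : Icc (0:ℝ) T ⊆ closure (interior (Icc (0:ℝ) T)) := by
          rw [interior_Icc, closure_Ioo hT.ne]
        exact MeasureTheory.Measure.eqOn_of_ae_eq hae hic.continuousOn continuousOn_const hsub
      have hgz : ∀ s ∈ Icc (0:ℝ) T, φ ᵥ* (exp (s • A) * B) = 0 := by
        intro s hs
        have ht : T - s ∈ Icc (0:ℝ) T := ⟨by linarith [hs.2], by linarith [hs.1]⟩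
        have hz := hgg (T - s) ht
        have hgeq : g (T - s) = φ ᵥ* (exp (s • A) * B) := by
          have h1 : g (T - s) = φ ᵥ* (E (T - s) * B) := Matrix.mulVec_transpose _ _
          have h2 : E (T - s) = exp (s • A) := by
            show exp ((T - (T - s)) • A) = exp (s • A)
            rw [sub_sub_cancel]
          rw [h1, h2]
        rw [← hgeq]
        exact dotProduct_self_eq_zero.mp hz
      have hall := vecMul_pow_mul_eq_zero_of_exp A B φ hT hgz
      exact hφ0 ((kalman_rank_iff A B).mp hrank φ hall)
    have hmem : x₁ - c₀ ∈ reachSet A B T := htop ▸ Submodule.mem_top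
    obtain ⟨u, hu, hLu⟩ := hmem
    refine ⟨u, hu, ?_⟩
    rw [hend u hu, hLu]
    abel
end

section
/- Hautus test: Let A be an n×n real matrix and B an n×m real matrix, regarded also as complex matrices. The following assertions are equivalent: (1) the Kalman matrix K(A,B) has rank n; (2) for every λ ∈ ℂ, the n×(n+m) complex matrix (λIₙ − A, B) has rank n; (3) for every complex eigenvalue λ of A, the matrix (λIₙ − A, B) has rank n; (4) for every z ∈ ℂⁿ which is an eigenvector of Aᵀ (i.e., z ≠ 0 and Aᵀz = λz for some λ ∈ ℂ), one has Bᵀz ≠ 0. -/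
open Matrix

section Aux

open Polynomial

/-- A matrix of full row rank has no nonzero left null vector, and conversely. -/
theorem hautus_rank_eq_iff_vecMul {n : ℕ} {J : Type*} [Fintype J] {F : Type*} [Field F]
    (M : Matrix (Fin n) J F) :
    M.rank = n ↔ ∀ z : Fin n → F, z ᵥ* M = 0 → z = 0 := by
  constructor
  · intro h z hz
    have hli : LinearIndependent F (fun i => M i) := by
      rw [linearIndependent_iff_card_eq_finrank_span, Set.finrank]
      change Fintype.card (Fin n) = Module.finrank F (Submodule.span F (Set.range M.row))
      rw [← Matrix.rank_eq_finrank_span_row, h, Fintype.card_fin]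
    have hinj : Function.Injective M.vecMul := Matrix.vecMul_injective_iff.mpr hli
    have : M.vecMul z = M.vecMul 0 := by simpa [Matrix.zero_vecMul] using hz
    exact hinj this
  · intro h
    have hinj : Function.Injective M.vecMul := by
      intro a b hab
      have : (a - b) ᵥ* M = 0 := by
        rw [Matrix.sub_vecMul]; simp only at hab; rw [hab]; simp
      have := h _ this
      exact sub_eq_zero.mp this
    have := (Matrix.vecMul_injective_iff.mp hinj).rank_matrix
    simpa using this

/-- Every power of a matrix lies in the span of the first `n` powers. -/
theorem hautus_pow_mem_span_pow {n : ℕ} (M : Matrix (Fin n) (Fin n) ℂ) (k : ℕ) :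
    M ^ k ∈ Submodule.span ℂ (Set.range fun i : Fin n => M ^ (i : ℕ)) := by
  rcases Nat.eq_zero_or_pos n with hn | hn
  · subst hn
    have : M ^ k = 0 := Subsingleton.elim _ _
    rw [this]; exact Submodule.zero_mem _
  rw [Matrix.pow_eq_aeval_mod_charpoly]
  set p := X ^ k %ₘ M.charpoly with hp
  rcases eq_or_ne p 0 with h0 | h0
  · rw [h0, map_zero]; exact Submodule.zero_mem _
  have hdeg : p.natDegree < n := by
    have h1 : p.degree < M.charpoly.degree := degree_modByMonic_lt _ (Matrix.charpoly_monic M)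
    rw [Matrix.charpoly_degree_eq_dim, Fintype.card_fin] at h1
    exact (Polynomial.natDegree_lt_iff_degree_lt h0).mpr h1
  rw [Polynomial.aeval_eq_sum_range' hdeg]
  refine Submodule.sum_mem _ fun i hi => ?_
  refine Submodule.smul_mem _ _ (Submodule.subset_span ?_)
  exact ⟨⟨i, Finset.mem_range.mp hi⟩, rfl⟩

/-- The key step of the Hautus test: if every eigenvector of `M` is not annihilated by `N`,
then a vector annihilated by `N ∘ M^k` for all `k < n` is zero. -/
theorem hautus_key_lemma {n m : ℕ} (M : Matrix (Fin n) (Fin n) ℂ) (N : Matrix (Fin m) (Fin n) ℂ)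
    (h4 : ∀ z : Fin n → ℂ, z ≠ 0 → (∃ lam : ℂ, M *ᵥ z = lam • z) → N *ᵥ z ≠ 0)
    (z : Fin n → ℂ) (hz : ∀ k : Fin n, N *ᵥ (M ^ (k : ℕ) *ᵥ z) = 0) : z = 0 := by
  by_contra hz0
  have hall : ∀ w : Fin n → ℂ, (∀ i : Fin n, N *ᵥ (M ^ (i : ℕ) *ᵥ w) = 0) →
      ∀ k : ℕ, N *ᵥ (M ^ k *ᵥ w) = 0 := by
    intro w hw k
    let L : Matrix (Fin n) (Fin n) ℂ →ₗ[ℂ] (Fin m → ℂ) :=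
      { toFun := fun P => N *ᵥ (P *ᵥ w)
        map_add' := by intro P Q; simp [Matrix.add_mulVec, Matrix.mulVec_add]
        map_smul' := by intro c P; simp [Matrix.smul_mulVec, Matrix.mulVec_smul] }
    have hker : Submodule.span ℂ (Set.range fun i : Fin n => M ^ (i : ℕ)) ≤ LinearMap.ker L := by
      rw [Submodule.span_le]
      rintro _ ⟨i, rfl⟩
      exact hw i
    exact hker (hautus_pow_mem_span_pow M k)
  let W : Submodule ℂ (Fin n → ℂ) :=
    { carrier := {w | ∀ k : ℕ, N *ᵥ (M ^ k *ᵥ w) = 0}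
      add_mem' := by intro a b ha hb k; simp [Matrix.mulVec_add, ha k, hb k]
      zero_mem' := by intro k; simp
      smul_mem' := by intro c a ha k; simp [Matrix.mulVec_smul, ha k] }
  have hzW : z ∈ W := hall z hz
  have hinv : ∀ w ∈ W, M.mulVecLin w ∈ W := by
    intro w hw k
    have : M ^ k *ᵥ (M *ᵥ w) = M ^ (k + 1) *ᵥ w := by
      rw [Matrix.mulVec_mulVec, ← pow_succ]
    simpa [Matrix.mulVecLin_apply, this] using hw (k + 1)
  let g := (M.mulVecLin).restrict hinv
  have : Nontrivial W := nontrivial_of_ne ⟨z, hzW⟩ 0 (by simpa using hz0)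
  obtain ⟨μ, hμ⟩ := Module.End.exists_eigenvalue g
  obtain ⟨w, hw⟩ := hμ.exists_hasEigenvector
  have hweq : M *ᵥ (w : Fin n → ℂ) = μ • (w : Fin n → ℂ) := by
    have := hw.apply_eq_smul
    have h2 : ((g w : W) : Fin n → ℂ) = M *ᵥ (w : Fin n → ℂ) := rfl
    rw [this] at h2
    simpa using h2.symm
  have hwne : (w : Fin n → ℂ) ≠ 0 := by
    simpa [Submodule.coe_eq_zero] using hw.right
  have hNw : N *ᵥ (w : Fin n → ℂ) = 0 := by
    have := w.2 0
    simpa using this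
  exact h4 w hwne ⟨μ, hweq⟩ hNw

/-- A left null vector of the Kalman matrix is a common null vector of the `Bᵀ (Aᵀ)^k`. -/
theorem hautus_vecMul_kalman {n m : ℕ} (A : Matrix (Fin n) (Fin n) ℝ)
    (B : Matrix (Fin n) (Fin m) ℝ) (z : Fin n → ℝ) :
    z ᵥ* kalmanMatrix A B = 0 ↔ ∀ k : Fin n, (Bᵀ * (Aᵀ) ^ (k : ℕ)) *ᵥ z = 0 := by
  have hcomp : ∀ p : Fin n × Fin m,
      (z ᵥ* kalmanMatrix A B) p = ((Bᵀ * (Aᵀ) ^ (p.1 : ℕ)) *ᵥ z) p.2 := by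
    intro p
    have h1 : (z ᵥ* kalmanMatrix A B) p = (z ᵥ* (A ^ (p.1 : ℕ) * B)) p.2 := rfl
    rw [h1, ← Matrix.vecMul_vecMul, ← Matrix.mulVec_transpose, ← Matrix.mulVec_transpose,
      Matrix.mulVec_mulVec, Matrix.transpose_pow]
  constructor
  · intro h k
    funext j
    have := hcomp (k, j)
    rw [h] at this
    exact this.symm
  · intro h
    funext p
    rw [hcomp p, h p.1]
    rfl

/-- Real null vectors map to complex null vectors. -/
theorem hautus_map_mulVec_zero {m n : ℕ} (D : Matrix (Fin m) (Fin n) ℝ) (x : Fin n → ℝ)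
    (h : D *ᵥ x = 0) :
    (D.map (algebraMap ℝ ℂ)) *ᵥ (fun i => algebraMap ℝ ℂ (x i)) = 0 := by
  funext j
  have := (RingHom.map_mulVec (algebraMap ℝ ℂ) D x j).symm
  rw [show ((algebraMap ℝ ℂ) ∘ x) = fun i => algebraMap ℝ ℂ (x i) from rfl] at this
  rw [this, h]
  simp

/-- Real and imaginary parts of a complex null vector of a real matrix are real null vectors. -/
theorem hautus_mulVec_re_im {m n : ℕ} (D : Matrix (Fin m) (Fin n) ℝ) (z : Fin n → ℂ)
    (h : (D.map (algebraMap ℝ ℂ)) *ᵥ z = 0) :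
    D *ᵥ (fun i => (z i).re) = 0 ∧ D *ᵥ (fun i => (z i).im) = 0 := by
  constructor
  · funext j
    have hj := congrFun h j
    simp only [Matrix.mulVec, dotProduct, Matrix.map_apply, Pi.zero_apply] at hj ⊢
    have hre := congrArg Complex.re hj
    simp only [Complex.re_sum, Complex.zero_re] at hre
    rw [← hre]
    apply Finset.sum_congr rfl
    intro i _
    simp [Complex.re_ofReal_mul]
  · funext j
    have hj := congrFun h j
    simp only [Matrix.mulVec, dotProduct, Matrix.map_apply, Pi.zero_apply] at hj ⊢
    have him := congrArg Complex.im hj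
    simp only [Complex.im_sum, Complex.zero_im] at him
    rw [← him]
    apply Finset.sum_congr rfl
    intro i _
    simp [Complex.im_ofReal_mul]

end Aux

/-- **Hautus test**: for real matrices `A` (n×n) and `B` (n×m), regarded as complex matrices,
the following are equivalent:
(1) the Kalman matrix `K(A,B)` has rank `n`;
(2) for every `λ ∈ ℂ`, the matrix `(λIₙ − A, B)` has rank `n`;
(3) for every complex eigenvalue `λ` of `A`, the matrix `(λIₙ − A, B)` has rank `n`;
(4) every eigenvector `z` of `Aᵀ` satisfies `Bᵀ z ≠ 0`. -/
theorem hautus_test {n m : ℕ} (A : Matrix (Fin n) (Fin n) ℝ) (B : Matrix (Fin n) (Fin m) ℝ) :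
    ((kalmanMatrix A B).rank = n ↔
      ∀ lam : ℂ,
        (Matrix.fromCols (lam • (1 : Matrix (Fin n) (Fin n) ℂ) - A.map (algebraMap ℝ ℂ))
          (B.map (algebraMap ℝ ℂ))).rank = n) ∧
    ((kalmanMatrix A B).rank = n ↔
      ∀ lam : ℂ, (∃ v : Fin n → ℂ, v ≠ 0 ∧ A.map (algebraMap ℝ ℂ) *ᵥ v = lam • v) →
        (Matrix.fromCols (lam • (1 : Matrix (Fin n) (Fin n) ℂ) - A.map (algebraMap ℝ ℂ))
          (B.map (algebraMap ℝ ℂ))).rank = n) ∧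
    ((kalmanMatrix A B).rank = n ↔
      ∀ z : Fin n → ℂ, z ≠ 0 → (∃ lam : ℂ, (A.map (algebraMap ℝ ℂ))ᵀ *ᵥ z = lam • z) →
        (B.map (algebraMap ℝ ℂ))ᵀ *ᵥ z ≠ 0) := by
  set φ := algebraMap ℝ ℂ with hφ
  set Ac := A.map φ with hAc
  set Bc := B.map φ with hBc
  -- transposes and powers commute with the base change
  have hAT : Acᵀ = Aᵀ.map φ := rfl
  have hBT : Bcᵀ = Bᵀ.map φ := rfl
  have hpow : ∀ k : ℕ, (Aᵀ.map φ) ^ k = ((Aᵀ) ^ k).map φ := by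
    intro k
    have := map_pow (φ.mapMatrix) (Aᵀ) k
    simpa [RingHom.mapMatrix_apply] using this.symm
  have hDk : ∀ (k : ℕ) (z : Fin n → ℂ),
      ((Bᵀ * (Aᵀ) ^ k).map φ) *ᵥ z = Bcᵀ *ᵥ ((Acᵀ) ^ k *ᵥ z) := by
    intro k z
    rw [Matrix.mulVec_mulVec, hAT, hBT, hpow k, ← Matrix.map_mul]
  -- the statements
  set S2 := ∀ lam : ℂ,
      (Matrix.fromCols (lam • (1 : Matrix (Fin n) (Fin n) ℂ) - Ac) Bc).rank = n with hS2
  set S3 := ∀ lam : ℂ, (∃ v : Fin n → ℂ, v ≠ 0 ∧ Ac *ᵥ v = lam • v) →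
      (Matrix.fromCols (lam • (1 : Matrix (Fin n) (Fin n) ℂ) - Ac) Bc).rank = n with hS3
  set P4 := ∀ z : Fin n → ℂ, z ≠ 0 → (∃ lam : ℂ, Acᵀ *ᵥ z = lam • z) → Bcᵀ *ᵥ z ≠ 0 with hP4
  -- (1) ↔ (4)
  have e14 : (kalmanMatrix A B).rank = n ↔ P4 := by
    rw [hautus_rank_eq_iff_vecMul]
    constructor
    · intro h1 z hz0 hlam hB
      obtain ⟨lam, hlam⟩ := hlam
      have hk : ∀ k : ℕ, (Acᵀ) ^ k *ᵥ z = lam ^ k • z := by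
        intro k
        induction k with
        | zero => simp
        | succ k ih =>
            rw [pow_succ, ← Matrix.mulVec_mulVec, hlam, Matrix.mulVec_smul, ih, smul_smul,
              ← pow_succ']
      have hDz : ∀ k : Fin n, ((Bᵀ * (Aᵀ) ^ (k : ℕ)).map φ) *ᵥ z = 0 := by
        intro k
        rw [hDk, hk, Matrix.mulVec_smul, hB, smul_zero]
      have hx : ∀ k : Fin n,
          (Bᵀ * (Aᵀ) ^ (k : ℕ)) *ᵥ (fun i => (z i).re) = 0 :=
        fun k => (hautus_mulVec_re_im _ z (hDz k)).1
      have hy : ∀ k : Fin n,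
          (Bᵀ * (Aᵀ) ^ (k : ℕ)) *ᵥ (fun i => (z i).im) = 0 :=
        fun k => (hautus_mulVec_re_im _ z (hDz k)).2
      have hx0 := h1 _ ((hautus_vecMul_kalman A B _).mpr hx)
      have hy0 := h1 _ ((hautus_vecMul_kalman A B _).mpr hy)
      apply hz0
      funext i
      have h1' : (z i).re = 0 := congrFun hx0 i
      have h2' : (z i).im = 0 := congrFun hy0 i
      exact Complex.ext h1' h2'
    · intro h4 x hx
      rw [hautus_vecMul_kalman] at hx
      have hz : ∀ k : Fin n, Bcᵀ *ᵥ ((Acᵀ) ^ (k : ℕ) *ᵥ (fun i => φ (x i))) = 0 := by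
        intro k
        rw [← hDk]
        exact hautus_map_mulVec_zero _ x (hx k)
      have := hautus_key_lemma Acᵀ Bcᵀ h4 _ hz
      funext i
      have := congrFun this i
      simpa [hφ] using this
  -- (4) → (2)
  have h42 : P4 → S2 := by
    intro h4 lam
    rw [hautus_rank_eq_iff_vecMul]
    intro z hz
    rw [Matrix.vecMul_fromCols] at hz
    have h1 : z ᵥ* (lam • (1 : Matrix (Fin n) (Fin n) ℂ) - Ac) = 0 := by
      funext j; exact congrFun hz (Sum.inl j)
    have h2 : z ᵥ* Bc = 0 := by
      funext j; exact congrFun hz (Sum.inr j)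
    have heig : Acᵀ *ᵥ z = lam • z := by
      have hsm : z ᵥ* (lam • (1 : Matrix (Fin n) (Fin n) ℂ)) = lam • z := by
        funext j
        simp [Matrix.vecMul, dotProduct, Matrix.smul_apply, Matrix.one_apply,
          mul_comm, Finset.sum_ite_eq]
      rw [Matrix.vecMul_sub, hsm, ← Matrix.mulVec_transpose, sub_eq_zero] at h1
      exact h1.symm
    by_contra hz0
    exact h4 z hz0 ⟨lam, heig⟩ (by rw [← Matrix.mulVec_transpose] at h2; exact h2)
  -- (2) → (3)
  have h23 : S2 → S3 := fun h lam _ => h lam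
  -- (3) → (4)
  have h34 : S3 → P4 := by
    intro h3 z hz0 hlam hB
    obtain ⟨lam, hlam⟩ := hlam
    set M0 := lam • (1 : Matrix (Fin n) (Fin n) ℂ) - Ac with hM0
    have hM0T : M0ᵀ *ᵥ z = 0 := by
      rw [hM0, Matrix.transpose_sub, Matrix.transpose_smul, Matrix.transpose_one,
        Matrix.sub_mulVec, Matrix.smul_mulVec, Matrix.one_mulVec, hlam, sub_self]
    have hdet : M0.det = 0 := by
      rw [← Matrix.det_transpose]
      exact (Matrix.exists_mulVec_eq_zero_iff).mp ⟨z, hz0, hM0T⟩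
    obtain ⟨v, hv0, hveq⟩ := (Matrix.exists_mulVec_eq_zero_iff).mpr hdet
    have hveig : Ac *ᵥ v = lam • v := by
      rw [hM0, Matrix.sub_mulVec, Matrix.smul_mulVec, Matrix.one_mulVec,
        sub_eq_zero] at hveq
      exact hveq.symm
    have hr := h3 lam ⟨v, hv0, hveig⟩
    have hznull : z ᵥ* Matrix.fromCols M0 Bc = 0 := by
      rw [Matrix.vecMul_fromCols]
      have h1 : z ᵥ* M0 = 0 := by rw [← Matrix.mulVec_transpose]; exact hM0T
      have h2 : z ᵥ* Bc = 0 := by rw [← Matrix.mulVec_transpose]; exact hB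
      rw [h1, h2]
      funext j
      cases j <;> rfl
    exact hz0 ((hautus_rank_eq_iff_vecMul _).mp hr z hznull)
  exact ⟨e14.trans ⟨fun h4 => h42 h4, fun h2 => h34 (h23 h2)⟩,
    e14.trans ⟨fun h4 => h23 (h42 h4), h34⟩, e14⟩
end

section
/- Controller decomposition (controllable/uncontrollable parts): Let A be an n×n real matrix, B an n×m real matrix, and let r = rank K(A,B). Then there exist an invertible n×n real matrix P, an r×r matrix A₁′, an (n−r)×(n−r) matrix A₂′, an r×(n−r) matrix A₃′ and an r×m matrix B₁′ such that, in block form, P A P⁻¹ = [[A₁′, A₃′], [0, A₂′]] and P B = [[B₁′], [0]], and moreover rank K(A₁′,B₁′) = r, i.e., the pair (A₁′,B₁′) satisfies the Kalman condition in dimension r. -/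
open Matrix

namespace ControllerAux

open Polynomial Module Submodule

variable {s m : ℕ}

/-- Generalized Kalman matrix with powers `0, …, t-1`. -/
noncomputable def kalmanGen (C : Matrix (Fin s) (Fin s) ℝ) (B : Matrix (Fin s) (Fin m) ℝ)
    (t : ℕ) : Matrix (Fin s) (Fin t × Fin m) ℝ :=
  Matrix.of fun i p => (C ^ (p.1 : ℕ) * B) i p.2

/-- Span of all columns of all `C^k * B`, `k : ℕ`. -/
noncomputable def colSpan (C : Matrix (Fin s) (Fin s) ℝ) (B : Matrix (Fin s) (Fin m) ℝ) :
    Submodule ℝ (Fin s → ℝ) :=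
  Submodule.span ℝ (⋃ k : ℕ, Set.range (C ^ k * B)ᵀ)

lemma col_mem (C : Matrix (Fin s) (Fin s) ℝ) (B : Matrix (Fin s) (Fin m) ℝ) (k : ℕ) (j : Fin m) :
    (C ^ k * B)ᵀ j ∈ colSpan C B :=
  Submodule.subset_span (Set.mem_iUnion.2 ⟨k, Set.mem_range_self j⟩)

lemma spanGen (C : Matrix (Fin s) (Fin s) ℝ) (B : Matrix (Fin s) (Fin m) ℝ) {t : ℕ}
    (hst : s ≤ t) :
    Submodule.span ℝ (Set.range (kalmanGen C B t)ᵀ) = colSpan C B := by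
  apply le_antisymm
  · rw [Submodule.span_le]
    rintro _ ⟨⟨k, j⟩, rfl⟩
    exact col_mem C B (k : ℕ) j
  · rw [colSpan, Submodule.span_le]
    intro x hx
    rw [Set.mem_iUnion] at hx
    obtain ⟨k, j, rfl⟩ := hx
    rcases Nat.eq_zero_or_pos s with hs | hs
    · have : (C ^ k * B)ᵀ j = 0 := by
        funext i
        subst hs
        exact i.elim0
      rw [this]; exact Submodule.zero_mem _
    · have hmon := Matrix.charpoly_monic C
      have hdeg : (X ^ k %ₘ C.charpoly).natDegree < t := by
        rcases eq_or_ne (X ^ k %ₘ C.charpoly) 0 with h0 | h0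
        · rw [h0]; simpa using lt_of_lt_of_le hs hst
        · rw [Polynomial.natDegree_lt_iff_degree_lt h0]
          have h1 : (X ^ k %ₘ C.charpoly).degree < C.charpoly.degree :=
            Polynomial.degree_modByMonic_lt _ hmon
          have h2 : C.charpoly.degree ≤ (t : ℕ) := by
            rw [Matrix.charpoly_degree_eq_dim]
            exact_mod_cast by simpa using hst
          exact lt_of_lt_of_le h1 h2
      have hC : C ^ k = ∑ l ∈ Finset.range t, (X ^ k %ₘ C.charpoly).coeff l • C ^ l := by
        rw [Matrix.pow_eq_aeval_mod_charpoly]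
        exact Polynomial.aeval_eq_sum_range' hdeg C
      have hcol : (C ^ k * B)ᵀ j
          = ∑ l ∈ Finset.range t, (X ^ k %ₘ C.charpoly).coeff l • (C ^ l * B)ᵀ j := by
        funext i
        rw [Matrix.transpose_apply, hC, Matrix.sum_mul, Matrix.sum_apply]
        simp only [Matrix.smul_mul, Matrix.smul_apply, Finset.sum_apply, Pi.smul_apply,
          Matrix.transpose_apply, smul_eq_mul]
      rw [hcol]
      refine Submodule.sum_mem _ fun l hl => Submodule.smul_mem _ _ (Submodule.subset_span ?_)
      exact ⟨(⟨l, Finset.mem_range.1 hl⟩, j), rfl⟩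

lemma mulVec_colSpan (C : Matrix (Fin s) (Fin s) ℝ) (B : Matrix (Fin s) (Fin m) ℝ) {x}
    (hx : x ∈ colSpan C B) : C.mulVec x ∈ colSpan C B := by
  have hmap : Submodule.map C.mulVecLin (colSpan C B) ≤ colSpan C B := by
    rw [colSpan, Submodule.map_span, Submodule.span_le]
    rintro _ ⟨y, hy, rfl⟩
    rw [Set.mem_iUnion] at hy
    obtain ⟨k, j, rfl⟩ := hy
    have : C.mulVecLin ((C ^ k * B)ᵀ j) = (C ^ (k + 1) * B)ᵀ j := by
      funext i
      rw [Matrix.mulVecLin_apply, Matrix.transpose_apply, pow_succ', Matrix.mul_assoc,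
        Matrix.mul_apply]
      rfl
    rw [this]
    exact col_mem C B (k + 1) j
  exact hmap ⟨x, hx, rfl⟩

end ControllerAux

open ControllerAux Module Submodule

/-- **Controller decomposition into controllable/uncontrollable parts**: if
`r = rank K(A,B)`, then there is an invertible change of coordinates `P` (with two-sided
inverse `Q`) such that `P A P⁻¹` is block upper-triangular, `[[A₁, A₃],[0, A₂]]`, and
`P B = [[B₁],[0]]`, with `A₁` of size `r×r`, `B₁` of size `r×m`, and the pair `(A₁,B₁)`
satisfying the Kalman condition `rank K(A₁,B₁) = r` in dimension `r`. -/
theorem controller_normal_form {n m r : ℕ}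
    (A : Matrix (Fin n) (Fin n) ℝ) (B : Matrix (Fin n) (Fin m) ℝ)
    (hr : (kalmanMatrix A B).rank = r) :
    ∃ (P : Matrix (Fin r ⊕ Fin (n - r)) (Fin n) ℝ)
      (Q : Matrix (Fin n) (Fin r ⊕ Fin (n - r)) ℝ)
      (A₁ : Matrix (Fin r) (Fin r) ℝ)
      (A₂ : Matrix (Fin (n - r)) (Fin (n - r)) ℝ)
      (A₃ : Matrix (Fin r) (Fin (n - r)) ℝ)
      (B₁ : Matrix (Fin r) (Fin m) ℝ),
      P * Q = 1 ∧ Q * P = 1 ∧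
      P * A * Q = Matrix.fromBlocks A₁ A₃ 0 A₂ ∧
      P * B = Matrix.fromRows B₁ 0 ∧
      (kalmanMatrix A₁ B₁).rank = r := by
  classical
  have hkg : kalmanMatrix A B = kalmanGen A B n := rfl
  have hrn : r ≤ n := by
    have h := Matrix.rank_le_card_height (kalmanMatrix A B)
    rw [hr] at h
    simpa using h
  set V : Submodule ℝ (Fin n → ℝ) := colSpan A B with hVdef
  have hVr : finrank ℝ V = r := by
    have h1 := Matrix.rank_eq_finrank_span_cols (kalmanMatrix A B)
    rw [hr, hkg, Matrix.col, spanGen A B le_rfl] at h1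
    exact h1.symm
  obtain ⟨W, hVW⟩ := Submodule.exists_isCompl V
  have hWr : finrank ℝ W = n - r := by
    have h := Submodule.finrank_add_eq_of_isCompl hVW
    rw [hVr, finrank_fin_fun] at h
    omega
  let eV : V ≃ₗ[ℝ] (Fin r → ℝ) :=
    LinearEquiv.ofFinrankEq _ _ (by rw [hVr, finrank_fin_fun])
  let eW : W ≃ₗ[ℝ] (Fin (n - r) → ℝ) :=
    LinearEquiv.ofFinrankEq _ _ (by rw [hWr, finrank_fin_fun])
  let e : (Fin n → ℝ) ≃ₗ[ℝ] ((Fin r ⊕ Fin (n - r)) → ℝ) :=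
    (Submodule.prodEquivOfIsCompl V W hVW).symm ≪≫ₗ (eV.prodCongr eW) ≪≫ₗ
      (LinearEquiv.sumArrowLequivProdArrow (Fin r) (Fin (n - r)) ℝ ℝ).symm
  -- membership in V is detected by vanishing of the `inr` coordinates
  have he : ∀ x : Fin n → ℝ, x ∈ V ↔ ∀ i, e x (Sum.inr i) = 0 := by
    intro x
    have hei : ∀ i, e x (Sum.inr i)
        = eW ((Submodule.prodEquivOfIsCompl V W hVW).symm x).2 i := by
      intro i
      show (LinearEquiv.sumArrowLequivProdArrow (Fin r) (Fin (n - r)) ℝ ℝ).symm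
        ((eV.prodCongr eW) ((Submodule.prodEquivOfIsCompl V W hVW).symm x)) (Sum.inr i) = _
      rw [LinearEquiv.prodCongr_apply]
      simp
    constructor
    · intro hxV i
      have hps : (Submodule.prodEquivOfIsCompl V W hVW).symm x = (⟨x, hxV⟩, 0) := by
        rw [LinearEquiv.symm_apply_eq]
        simp [Submodule.coe_prodEquivOfIsCompl']
      rw [hei, hps]
      simp
    · intro h
      have h2 : ((Submodule.prodEquivOfIsCompl V W hVW).symm x).2 = 0 := by
        apply eW.injective
        funext i
        simpa using (hei i).symm.trans (h i)
      have hx : x = ↑((Submodule.prodEquivOfIsCompl V W hVW).symm x).1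
          + ↑((Submodule.prodEquivOfIsCompl V W hVW).symm x).2 := by
        conv_lhs => rw [← (Submodule.prodEquivOfIsCompl V W hVW).apply_symm_apply x]
        rw [Submodule.coe_prodEquivOfIsCompl']
      rw [hx, h2]
      simpa using (((Submodule.prodEquivOfIsCompl V W hVW).symm x).1).2
  set P : Matrix (Fin r ⊕ Fin (n - r)) (Fin n) ℝ := LinearMap.toMatrix' e.toLinearMap with hP
  set Q : Matrix (Fin n) (Fin r ⊕ Fin (n - r)) ℝ := LinearMap.toMatrix' e.symm.toLinearMap with hQ
  have hPQ : P * Q = 1 := by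
    rw [hP, hQ, ← LinearMap.toMatrix'_comp]
    have : (e.toLinearMap ∘ₗ e.symm.toLinearMap)
        = (LinearMap.id : ((Fin r ⊕ Fin (n - r)) → ℝ) →ₗ[ℝ] _) := by
      ext x; simp
    rw [this, LinearMap.toMatrix'_id]
  have hQP : Q * P = 1 := by
    rw [hP, hQ, ← LinearMap.toMatrix'_comp]
    have : (e.symm.toLinearMap ∘ₗ e.toLinearMap)
        = (LinearMap.id : ((Fin n) → ℝ) →ₗ[ℝ] _) := by
      ext x; simp
    rw [this, LinearMap.toMatrix'_id]
  -- multiplication by `P` computes `e` on columns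
  have hPM : ∀ {κ : Type} (M : Matrix (Fin n) κ ℝ) (u : Fin r ⊕ Fin (n - r)) (j : κ),
      (P * M) u j = e (Mᵀ j) u := by
    intro κ M u j
    have hMj : Mᵀ j = ∑ l, M l j • (Pi.single l 1 : Fin n → ℝ) := by
      funext i
      simp [Pi.single_apply, Finset.sum_apply]
    rw [Matrix.mul_apply, hMj, map_sum]
    rw [Finset.sum_apply]
    refine Finset.sum_congr rfl fun l _ => ?_
    have hfun : (fun l' => if l' = l then (1 : ℝ) else 0) = (Pi.single l 1 : Fin n → ℝ) := by
      funext l'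
      simp [Pi.single_apply]
    have : P u l = e (Pi.single l 1) u := by
      rw [hP, LinearMap.toMatrix'_apply]
      rfl
    rw [this]
    simp [mul_comm]
  -- columns of Q lying over `inl` are in V
  have hQcol : ∀ j : Fin r, (fun l => Q l (Sum.inl j)) ∈ V := by
    intro j
    have hQj : (fun l => Q l (Sum.inl j))
        = e.symm (Pi.single (Sum.inl j) 1) := by
      have hfun : (fun l' => if l' = Sum.inl j then (1 : ℝ) else 0)
          = (Pi.single (Sum.inl j) 1 : (Fin r ⊕ Fin (n - r)) → ℝ) := by
        funext l'
        simp [Pi.single_apply]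
      funext l
      rw [hQ, LinearMap.toMatrix'_apply]
      rfl
    rw [hQj, he]
    intro i
    simp [Pi.single_apply]
  -- P * B has zero lower rows
  have hBV : ∀ j, Bᵀ j ∈ V := by
    intro j
    have : Bᵀ j = (A ^ 0 * B)ᵀ j := by rw [pow_zero, Matrix.one_mul]
    rw [this]
    exact col_mem A B 0 j
  have hPBzero : ∀ i j, (P * B) (Sum.inr i) j = 0 := by
    intro i j
    rw [hPM B (Sum.inr i) j]
    exact (he _).1 (hBV j) i
  -- P * A * Q has zero lower-left block
  have hAQzero : ∀ i j, (P * A * Q) (Sum.inr i) (Sum.inl j) = 0 := by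
    intro i j
    rw [Matrix.mul_assoc, hPM (A * Q) (Sum.inr i) (Sum.inl j)]
    refine (he _).1 ?_ i
    have hcol : (A * Q)ᵀ (Sum.inl j) = A.mulVec (fun l => Q l (Sum.inl j)) := by
      funext i'
      rw [Matrix.transpose_apply, Matrix.mul_apply]
      rfl
    rw [hcol]
    exact mulVec_colSpan A B (hQcol j)
  set A₁ : Matrix (Fin r) (Fin r) ℝ := (P * A * Q).toBlocks₁₁ with hA₁
  set A₂ : Matrix (Fin (n - r)) (Fin (n - r)) ℝ := (P * A * Q).toBlocks₂₂ with hA₂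
  set A₃ : Matrix (Fin r) (Fin (n - r)) ℝ := (P * A * Q).toBlocks₁₂ with hA₃
  set B₁ : Matrix (Fin r) (Fin m) ℝ := Matrix.of (fun i j => (P * B) (Sum.inl i) j) with hB₁
  have hblocks : P * A * Q = Matrix.fromBlocks A₁ A₃ 0 A₂ := by
    have h21 : (P * A * Q).toBlocks₂₁ = 0 := by
      ext i j
      exact hAQzero i j
    conv_lhs => rw [← Matrix.fromBlocks_toBlocks (P * A * Q)]
    rw [h21]
  have hPB : P * B = Matrix.fromRows B₁ 0 := by
    ext i j
    cases i with
    | inl i => rw [Matrix.fromRows_apply_inl]; rfl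
    | inr i => rw [Matrix.fromRows_apply_inr]; exact hPBzero i j
  -- helper: block multiplication with fromRows
  have hfb : ∀ (X : Matrix (Fin r) (Fin m) ℝ),
      Matrix.fromBlocks A₁ A₃ 0 A₂ * Matrix.fromRows X (0 : Matrix (Fin (n - r)) (Fin m) ℝ)
        = Matrix.fromRows (A₁ * X) 0 := by
    intro X
    ext i j
    cases i with
    | inl i =>
      rw [Matrix.fromRows_apply_inl, Matrix.mul_apply, Matrix.mul_apply, Fintype.sum_sum_type]
      simp [Matrix.fromRows_apply_inl, Matrix.fromRows_apply_inr]
    | inr i =>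
      rw [Matrix.fromRows_apply_inr, Matrix.mul_apply, Fintype.sum_sum_type]
      simp [Matrix.fromRows_apply_inl, Matrix.fromRows_apply_inr]
  -- power lemma
  have hpow : ∀ k : ℕ, P * A ^ k * B = Matrix.fromRows (A₁ ^ k * B₁) 0 := by
    intro k
    induction k with
    | zero => simpa using hPB
    | succ k ih =>
      have h1 : P * A ^ (k + 1) * B = (P * A * Q) * (P * A ^ k * B) := by
        rw [pow_succ']
        simp only [Matrix.mul_assoc]
        rw [← Matrix.mul_assoc Q P, hQP, Matrix.one_mul]
      rw [h1, ih, hblocks, hfb, ← Matrix.mul_assoc, ← pow_succ']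
  -- P * K(A,B) = fromRows (kalmanGen A₁ B₁ n) 0
  have hPK : P * kalmanMatrix A B = Matrix.fromRows (kalmanGen A₁ B₁ n) 0 := by
    ext i p
    obtain ⟨k, j⟩ := p
    have h1 : (P * kalmanMatrix A B) i (k, j) = (P * A ^ (k : ℕ) * B) i j := by
      rw [Matrix.mul_assoc, Matrix.mul_apply, Matrix.mul_apply]
      rfl
    rw [h1, hpow (k : ℕ)]
    cases i with
    | inl i =>
      rw [Matrix.fromRows_apply_inl, Matrix.fromRows_apply_inl]
      rfl
    | inr i =>
      rw [Matrix.fromRows_apply_inr, Matrix.fromRows_apply_inr]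
      simp
  -- rank of P * M equals rank of M (P has left inverse)
  have hrankP : ∀ {κ : Type} [Fintype κ] (M : Matrix (Fin n) κ ℝ), (P * M).rank = M.rank := by
    intro κ _ M
    have hinj : Function.Injective P.mulVecLin := by
      have : Q.mulVecLin ∘ₗ P.mulVecLin = LinearMap.id := by
        rw [← Matrix.mulVecLin_mul, hQP]
        exact Matrix.mulVecLin_one
      intro x y hxy
      have h3 := congrArg Q.mulVecLin hxy
      rwa [← LinearMap.comp_apply, ← LinearMap.comp_apply, this, LinearMap.id_apply,
        LinearMap.id_apply] at h3
    rw [Matrix.rank, Matrix.rank, Matrix.mulVecLin_mul, LinearMap.range_comp]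
    exact ((Submodule.equivMapOfInjective P.mulVecLin hinj
      (LinearMap.range M.mulVecLin)).finrank_eq).symm
  -- rank of fromRows M 0 equals rank of M
  have hrankRows : ∀ (M : Matrix (Fin r) (Fin n × Fin m) ℝ),
      (Matrix.fromRows M (0 : Matrix (Fin (n - r)) (Fin n × Fin m) ℝ)).rank = M.rank := by
    intro M
    let ι : (Fin r → ℝ) →ₗ[ℝ] ((Fin r ⊕ Fin (n - r)) → ℝ) :=
      (LinearEquiv.sumArrowLequivProdArrow (Fin r) (Fin (n - r)) ℝ ℝ).symm.toLinearMap ∘ₗ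
        LinearMap.inl ℝ (Fin r → ℝ) (Fin (n - r) → ℝ)
    have hι : ∀ x : Fin r → ℝ, ι x = Sum.elim x 0 := by
      intro x
      funext u
      cases u with
      | inl i =>
        show (LinearEquiv.sumArrowLequivProdArrow (Fin r) (Fin (n - r)) ℝ ℝ).symm
          (x, 0) (Sum.inl i) = x i
        simp
      | inr i =>
        show (LinearEquiv.sumArrowLequivProdArrow (Fin r) (Fin (n - r)) ℝ ℝ).symm
          (x, 0) (Sum.inr i) = 0
        simp
    have hιinj : Function.Injective ι := by
      intro x y hxy
      rw [hι x, hι y] at hxy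
      funext i
      exact congrFun hxy (Sum.inl i)
    have hcols : (Matrix.fromRows M (0 : Matrix (Fin (n - r)) (Fin n × Fin m) ℝ))ᵀ = ι ∘ Mᵀ := by
      funext p u
      change (Matrix.fromRows M (0 : Matrix (Fin (n - r)) (Fin n × Fin m) ℝ)) u p = ι (Mᵀ p) u
      rw [hι]
      cases u with
      | inl i => simp
      | inr i => simp
    rw [Matrix.rank_eq_finrank_span_cols, Matrix.rank_eq_finrank_span_cols, Matrix.col,
      Matrix.col, hcols,
      show Set.range (⇑ι ∘ Mᵀ) = ι '' Set.range Mᵀ from Set.range_comp _ _, ← Submodule.map_span]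
    exact ((Submodule.equivMapOfInjective ι hιinj
      (Submodule.span ℝ (Set.range Mᵀ))).finrank_eq).symm
  -- final rank computation
  have hfinal : (kalmanMatrix A₁ B₁).rank = r := by
    have h1 : (kalmanGen A₁ B₁ n).rank = r := by
      have := hrankP (kalmanMatrix A B)
      rw [hr, hPK, hrankRows] at this
      exact this
    have h2 : (kalmanGen A₁ B₁ n).rank = finrank ℝ (colSpan A₁ B₁) := by
      rw [Matrix.rank_eq_finrank_span_cols, Matrix.col, spanGen A₁ B₁ hrn]
    have h3 : (kalmanMatrix A₁ B₁).rank = finrank ℝ (colSpan A₁ B₁) := by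
      have hk : kalmanMatrix A₁ B₁ = kalmanGen A₁ B₁ r := rfl
      rw [hk, Matrix.rank_eq_finrank_span_cols, Matrix.col, spanGen A₁ B₁ le_rfl]
    rw [h3, ← h2, h1]
  exact ⟨P, Q, A₁, A₂, A₃, B₁, hPQ, hQP, hblocks, hPB, hfinal⟩
end

section
/- Brunovski normal form (single-input case): Let A be an n×n real matrix and b ∈ ℝⁿ a column vector such that the Kalman matrix K(A,b) = (b, Ab, …, A^{n−1}b) has rank n. Write the characteristic polynomial of A as χ_A(X) = Xⁿ + a₁X^{n−1} + ⋯ + a_{n−1}X + aₙ. Then there exists an invertible n×n real matrix P such that P A P⁻¹ = Ã and P b = b̃, where Ã is the companion matrix with entries Ã_{i,i+1} = 1 for 1 ≤ i ≤ n−1, last row (−aₙ, −a_{n−1}, …, −a₁), and all other entries zero, and b̃ = (0, …, 0, 1)ᵀ. -/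
open Matrix

open Polynomial

private lemma aux_shift (n j : ℕ) (hn : 0 < n) (g c : ℕ → ℝ) :
    ∑ s ∈ Finset.range n, g s * c (j + s)
      = g 0 * c j + ∑ s ∈ Finset.range (n - 1), g (s + 1) * c (j + 1 + s) := by
  obtain ⟨m, rfl⟩ : ∃ m, n = m + 1 := ⟨n - 1, by omega⟩
  rw [Finset.sum_range_succ']
  simp only [Nat.add_sub_cancel, add_zero]
  rw [add_comm]
  congr 1
  exact Finset.sum_congr rfl fun s _ => by rw [show j + (s + 1) = j + 1 + s by ring]

private lemma aux_top (n j : ℕ) (hn : 0 < n) (g c : ℕ → ℝ) :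
    ∑ s ∈ Finset.range n, g (s + 1) * c (j + 1 + s)
      = (∑ s ∈ Finset.range (n - 1), g (s + 1) * c (j + 1 + s)) + g n * c (j + n) := by
  obtain ⟨m, rfl⟩ : ∃ m, n = m + 1 := ⟨n - 1, by omega⟩
  rw [Finset.sum_range_succ]
  simp only [Nat.add_sub_cancel]
  rw [show j + (m + 1) = j + 1 + m by ring]

private lemma aux_ch (n : ℕ) (g c : ℕ → ℝ) :
    ∑ k ∈ Finset.range (n + 1), c k * g k
      = c 0 * g 0 + ∑ s ∈ Finset.range n, c (s + 1) * g (s + 1) := by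
  rw [Finset.sum_range_succ', add_comm]


/-- The single-input Kalman matrix `(b, Ab, …, A^{n−1}b)` of a pair `(A, b)` with `b ∈ ℝⁿ`. -/
noncomputable def kalmanMatrixSingle {n : ℕ} (A : Matrix (Fin n) (Fin n) ℝ) (b : Fin n → ℝ) :
    Matrix (Fin n) (Fin n) ℝ :=
  Matrix.of fun i k => (A ^ (k : ℕ) *ᵥ b) i

/-- The companion matrix associated with the characteristic polynomial
`χ_A = Xⁿ + a₁X^{n−1} + ⋯ + aₙ`: superdiagonal entries equal `1`, last row is
`(−aₙ, −a_{n−1}, …, −a₁)` (i.e. the entry in column `j` is `−(χ_A).coeff j`),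
and all other entries vanish. -/
noncomputable def companionOf {n : ℕ} (A : Matrix (Fin n) (Fin n) ℝ) :
    Matrix (Fin n) (Fin n) ℝ :=
  Matrix.of fun i j =>
    if (i : ℕ) = n - 1 then -(Matrix.charpoly A).coeff (j : ℕ)
    else if (j : ℕ) = (i : ℕ) + 1 then 1 else 0

/-- **Brunovski normal form (single-input case)**: if the pair `(A, b)` satisfies the
Kalman condition, then it is similar to the pair `(Ã, b̃)` where `Ã` is the companion
matrix of the characteristic polynomial of `A` and `b̃ = (0, …, 0, 1)ᵀ`. -/
theorem brunovski_normal_form {n : ℕ} (A : Matrix (Fin n) (Fin n) ℝ) (b : Fin n → ℝ)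
    (hK : (kalmanMatrixSingle A b).rank = n) :
    ∃ P : Matrix (Fin n) (Fin n) ℝ, IsUnit P ∧
      P * A * P⁻¹ = companionOf A ∧
      P *ᵥ b = (fun i : Fin n => if (i : ℕ) = n - 1 then (1:ℝ) else 0) := by
  rcases Nat.eq_zero_or_pos n with hn | hn
  · subst hn
    refine ⟨1, isUnit_one, ?_, ?_⟩
    · ext i j; exact i.elim0
    · funext i; exact i.elim0
  -- Step 1 : K is a unit
  have hKu : IsUnit (kalmanMatrixSingle A b) := by
    rw [← Matrix.mulVec_surjective_iff_isUnit]
    have h1 : Module.finrank ℝ (LinearMap.range (kalmanMatrixSingle A b).mulVecLin) = n := hK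
    have h2 : LinearMap.range (kalmanMatrixSingle A b).mulVecLin = ⊤ :=
      Submodule.eq_top_of_finrank_eq (by rw [h1, Module.finrank_fin_fun])
    intro y
    obtain ⟨x, hx⟩ := LinearMap.range_eq_top.mp h2 y
    exact ⟨x, by simpa using hx⟩
  -- charpoly facts
  set χ := Matrix.charpoly A with hχ
  have hdeg : χ.natDegree = n := by rw [hχ, A.charpoly_natDegree_eq_dim, Fintype.card_fin]
  have hcn : χ.coeff n = 1 := by
    have := (A.charpoly_monic).coeff_natDegree
    rwa [hdeg] at this
  have hc0 : ∀ k, n < k → χ.coeff k = 0 := fun k hk =>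
    Polynomial.coeff_eq_zero_of_natDegree_lt (by omega)
  -- Step 2 : the anti-triangular matrix M is a unit
  set M : Matrix (Fin n) (Fin n) ℝ := Matrix.of fun s j => χ.coeff ((j : ℕ) + 1 + (s : ℕ)) with hM
  set N : Matrix (Fin n) (Fin n) ℝ := M.submatrix id Fin.rev with hN
  have hNentry : ∀ s j : Fin n, N s j = χ.coeff (n - (j : ℕ) + (s : ℕ)) := by
    intro s j
    have h : ((j.rev : ℕ) + 1 + (s : ℕ)) = n - (j : ℕ) + (s : ℕ) := by
      have := j.is_lt
      simp [Fin.val_rev]; omega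
    simp only [hN, hM, Matrix.submatrix_apply, id, Matrix.of_apply]
    rw [h]
  have hNtri : N.BlockTriangular id := by
    intro s j hsj
    have hj := j.is_lt
    rw [hNentry]
    exact hc0 _ (by simp at hsj; omega)
  have hNdet : N.det = 1 := by
    rw [Matrix.det_of_upperTriangular hNtri]
    apply Finset.prod_eq_one
    intro j _
    rw [hNentry]
    have hj := j.is_lt
    have h : n - (j : ℕ) + (j : ℕ) = n := by omega
    rw [h, hcn]
  have hMu : IsUnit M := by
    have h : M = N.submatrix id (Fin.revPerm : Equiv.Perm (Fin n)) := by
      ext s j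
      simp [hN, Matrix.submatrix_apply, Fin.rev_rev]
    rw [Matrix.isUnit_iff_isUnit_det, h, Matrix.det_permute' _ N, hNdet, isUnit_iff_ne_zero]
    simp
  -- Step 3 : Q := K * M and its entries
  set Q : Matrix (Fin n) (Fin n) ℝ := kalmanMatrixSingle A b * M with hQ
  have hQu : IsUnit Q := hKu.mul hMu
  have hQdet : IsUnit Q.det := (Matrix.isUnit_iff_isUnit_det Q).mp hQu
  have hQentry : ∀ (i j : Fin n),
      Q i j = ∑ s ∈ Finset.range n, (A ^ s *ᵥ b) i * χ.coeff ((j : ℕ) + 1 + s) := by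
    intro i j
    rw [hQ, Matrix.mul_apply, ← Fin.sum_univ_eq_sum_range
      (fun s => (A ^ s *ᵥ b) i * χ.coeff ((j : ℕ) + 1 + s))]
    rfl
  set last : Fin n := ⟨n - 1, by omega⟩ with hlast
  have hQlast : ∀ i, Q i last = b i := by
    intro i
    rw [hQentry, aux_shift n (n - 1 + 1) hn (fun s => (A ^ s *ᵥ b) i) χ.coeff]
    · have h1 : n - 1 + 1 = n := by omega
      rw [h1, hcn]
      have h2 : ∀ s ∈ Finset.range (n - 1),
          (A ^ (s + 1) *ᵥ b) i * χ.coeff (n + 1 + s) = 0 := fun s _ => by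
        rw [hc0 _ (by omega), mul_zero]
      rw [Finset.sum_eq_zero h2]
      simp
  -- Cayley–Hamilton, entrywise on b
  have hCH : ∀ i, ∑ k ∈ Finset.range (n + 1), χ.coeff k * (A ^ k *ᵥ b) i = 0 := by
    intro i
    have h0 := Matrix.aeval_self_charpoly A
    rw [Polynomial.aeval_eq_sum_range, ← hχ, hdeg] at h0
    calc ∑ k ∈ Finset.range (n + 1), χ.coeff k * (A ^ k *ᵥ b) i
        = ∑ k ∈ Finset.range (n + 1), ∑ x : Fin n, χ.coeff k * ((A ^ k) i x * b x) := by
          simp [Matrix.mulVec, dotProduct, Finset.mul_sum]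
      _ = ∑ x : Fin n, ∑ k ∈ Finset.range (n + 1), χ.coeff k * ((A ^ k) i x * b x) :=
          Finset.sum_comm
      _ = ∑ x : Fin n, (∑ k ∈ Finset.range (n + 1), χ.coeff k • A ^ k) i x * b x := by
          simp [Matrix.sum_apply, Finset.sum_mul, mul_assoc]
      _ = 0 := by rw [h0]; simp
  -- the key intertwining identity
  have hAQ : A * Q = Q * companionOf A := by
    ext i j
    have hj := j.is_lt
    have hL : (A * Q) i j
        = ∑ s ∈ Finset.range n, (A ^ (s + 1) *ᵥ b) i * χ.coeff ((j : ℕ) + 1 + s) := by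
      rw [Matrix.mul_apply]
      calc ∑ k, A i k * Q k j
          = ∑ k, ∑ s ∈ Finset.range n,
              A i k * ((A ^ s *ᵥ b) k * χ.coeff ((j : ℕ) + 1 + s)) := by
            exact Finset.sum_congr rfl fun k _ => by rw [hQentry k j, Finset.mul_sum]
        _ = ∑ s ∈ Finset.range n, ∑ k,
              A i k * ((A ^ s *ᵥ b) k * χ.coeff ((j : ℕ) + 1 + s)) := Finset.sum_comm
        _ = ∑ s ∈ Finset.range n, (A ^ (s + 1) *ᵥ b) i * χ.coeff ((j : ℕ) + 1 + s) := by
            refine Finset.sum_congr rfl fun s _ => ?_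
            have h1 : (A ^ (s + 1) *ᵥ b) i = ∑ k, A i k * (A ^ s *ᵥ b) k := by
              rw [pow_succ', ← Matrix.mulVec_mulVec]
              simp [Matrix.mulVec, dotProduct]
            rw [h1, Finset.sum_mul]
            exact Finset.sum_congr rfl fun k _ => by ring
    have hcomp : ∀ k : Fin n, companionOf A k j
        = (if k = last then -χ.coeff (j : ℕ) else 0)
          + (if (j : ℕ) = (k : ℕ) + 1 then 1 else 0) := by
      intro k
      have hk := k.is_lt
      simp only [companionOf, Matrix.of_apply]
      by_cases hk1 : (k : ℕ) = n - 1
      · have hkl : k = last := Fin.ext (by simp [hlast, hk1])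
        rw [if_pos hk1, if_pos hkl, if_neg (by omega), add_zero]
      · have hkl : k ≠ last := fun h => hk1 (by rw [h])
        rw [if_neg hk1, if_neg hkl, zero_add]
    have hR : (Q * companionOf A) i j
        = -(χ.coeff (j : ℕ)) * b i
          + (if h : 1 ≤ (j : ℕ) then Q i ⟨(j : ℕ) - 1, by omega⟩ else 0) := by
      rw [Matrix.mul_apply]
      rw [Finset.sum_congr rfl fun k _ => by rw [hcomp k, mul_add]]
      rw [Finset.sum_add_distrib]
      congr 1
      · rw [Finset.sum_congr rfl fun k _ => by rw [mul_ite, mul_zero]]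
        rw [Finset.sum_ite_eq' Finset.univ last (fun k => Q i k * (-χ.coeff (j : ℕ)))]
        simp [hQlast i]
        ring
      · by_cases hj1 : 1 ≤ (j : ℕ)
        · rw [dif_pos hj1]
          have h2 : ∀ k : Fin n, (if (j : ℕ) = (k : ℕ) + 1 then (1:ℝ) else 0)
              = if k = (⟨(j : ℕ) - 1, by omega⟩ : Fin n) then 1 else 0 := by
            intro k
            refine if_congr ?_ rfl rfl
            rw [Fin.ext_iff]
            simp only []
            omega
          rw [Finset.sum_congr rfl fun k _ => by rw [h2 k, mul_ite, mul_one, mul_zero]]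
          rw [Finset.sum_ite_eq' Finset.univ _ (fun k => Q i k)]
          simp
        · rw [dif_neg hj1]
          have hj0 : (j : ℕ) = 0 := by omega
          rw [Finset.sum_congr rfl fun k _ => by
            rw [if_neg (by omega : ¬ (j : ℕ) = (k : ℕ) + 1), mul_zero]]
          exact Finset.sum_const_zero
    rw [hL, hR]
    by_cases hj1 : 1 ≤ (j : ℕ)
    · rw [dif_pos hj1, hQentry]
      have h3 : ∀ s, (j : ℕ) - 1 + 1 + s = (j : ℕ) + s := by omega
      simp only [h3]
      rw [aux_shift n (j : ℕ) hn (fun s => (A ^ s *ᵥ b) i) χ.coeff]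
      rw [aux_top n (j : ℕ) hn (fun s => (A ^ s *ᵥ b) i) χ.coeff,
        hc0 ((j : ℕ) + n) (by omega), mul_zero, add_zero]
      simp only [pow_zero, Matrix.one_mulVec]
      ring
    · rw [dif_neg hj1, add_zero]
      have hj0 : (j : ℕ) = 0 := by omega
      have h4 := hCH i
      rw [aux_ch n (fun k => (A ^ k *ᵥ b) i) χ.coeff] at h4
      have h5 : ∑ s ∈ Finset.range n, χ.coeff (s + 1) * (A ^ (s + 1) *ᵥ b) i
          = -(χ.coeff 0 * (A ^ 0 *ᵥ b) i) := by linarith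
      rw [Finset.sum_congr rfl fun s _ => by
        rw [show (j : ℕ) + 1 + s = s + 1 by omega, mul_comm]]
      rw [h5, hj0]
      simp [Matrix.one_mulVec]
  -- conclusion
  refine ⟨Q⁻¹, Matrix.isUnit_nonsing_inv_iff.mpr hQu, ?_, ?_⟩
  · rw [Matrix.nonsing_inv_nonsing_inv Q hQdet, Matrix.mul_assoc, hAQ, ← Matrix.mul_assoc,
      Matrix.nonsing_inv_mul Q hQdet, Matrix.one_mul]
  · have hQe : Q *ᵥ (fun i : Fin n => if (i : ℕ) = n - 1 then (1:ℝ) else 0) = b := by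
      funext i
      simp only [Matrix.mulVec, dotProduct]
      have h6 : ∀ j : Fin n, (if (j : ℕ) = n - 1 then (1:ℝ) else 0)
          = if j = last then 1 else 0 := by
        intro j
        refine if_congr ?_ rfl rfl
        rw [Fin.ext_iff]
      rw [Finset.sum_congr rfl fun j _ => by rw [h6 j, mul_ite, mul_one, mul_zero]]
      rw [Finset.sum_ite_eq' Finset.univ last (fun j => Q i j)]
      simp [hQlast i]
    rw [← hQe, Matrix.mulVec_mulVec, Matrix.nonsing_inv_mul Q hQdet, Matrix.one_mulVec]
end

section
/- Lyapunov lemma: Let A be an n×n real matrix all of whose complex eigenvalues have negative real part (A is Hurwitz). Then the matrix-valued function t ↦ e^{tAᵀ} e^{tA} is integrable on [0,∞), and the matrix P = ∫₀^{+∞} e^{tAᵀ} e^{tA} dt is symmetric positive definite and satisfies the Lyapunov equation AᵀP + PA = −Iₙ. -/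
open MeasureTheory Matrix Set NormedSpace Topology Filter
open scoped NNReal ENNReal

namespace LyapunovAux

section Aux
attribute [local instance] Matrix.linftyOpNormedAddCommGroup Matrix.linftyOpNormedRing
  Matrix.linftyOpNormedAlgebra

variable {n : ℕ}


lemma entry_le_norm (M : Matrix (Fin n) (Fin n) ℂ) (i j : Fin n) : ‖M i j‖ ≤ ‖M‖ := by
  rw [Matrix.linfty_opNorm_def]
  calc ‖M i j‖ ≤ ∑ j', ‖M i j'‖ :=
        Finset.single_le_sum (fun _ _ => norm_nonneg _) (Finset.mem_univ _)
    _ ≤ _ := by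
        have h2 : (∑ j', ‖M i j'‖₊ : ℝ≥0) ≤ Finset.univ.sup fun i => ∑ j', ‖M i j'‖₊ :=
          Finset.le_sup (f := fun i => ∑ j', ‖M i j'‖₊) (Finset.mem_univ i)
        calc (∑ j', ‖M i j'‖) = ((∑ j', ‖M i j'‖₊ : ℝ≥0) : ℝ) := by push_cast [coe_nnnorm]; rfl
          _ ≤ _ := by exact_mod_cast h2

lemma exp_mulVec (B : Matrix (Fin n) (Fin n) ℂ) (μ : ℂ) (v : Fin n → ℂ)
    (hv : B *ᵥ v = μ • v) : NormedSpace.exp B *ᵥ v = Complex.exp μ • v := by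
  have hpow : ∀ k : ℕ, (B ^ k) *ᵥ v = μ ^ k • v := by
    intro k
    induction k with
    | zero => simp
    | succ k ih =>
      rw [pow_succ, ← Matrix.mulVec_mulVec, hv, Matrix.mulVec_smul, ih, smul_smul, pow_succ,
        mul_comm]
  let L : Matrix (Fin n) (Fin n) ℂ →ₗ[ℂ] (Fin n → ℂ) :=
    { toFun := fun M => M *ᵥ v
      map_add' := fun M N => Matrix.add_mulVec M N v
      map_smul' := fun c M => (Matrix.smul_mulVec c M v) }
  have hL : Continuous L := L.continuous_of_finiteDimensional
  have hsum := expSeries_hasSum_exp (𝕂 := ℂ) B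
  have hsum2 : HasSum (fun k : ℕ => L ((k.factorial⁻¹ : ℂ) • B ^ k)) (L (NormedSpace.exp B)) := by
    refine (hsum.map L hL).congr_fun ?_
    intro k
    simp only [Function.comp_apply, expSeries_apply_eq]
  have hsum3 : HasSum (fun k : ℕ => ((k.factorial⁻¹ : ℂ) * μ ^ k) • v) (NormedSpace.exp B *ᵥ v) := by
    refine hsum2.congr_fun ?_
    intro k
    show ((k.factorial⁻¹ : ℂ) * μ ^ k) • v = ((k.factorial⁻¹ : ℂ) • B ^ k) *ᵥ v
    rw [Matrix.smul_mulVec, hpow, smul_smul]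
  have hsc : HasSum (fun k : ℕ => ((k.factorial⁻¹ : ℂ) * μ ^ k) • v) (NormedSpace.exp μ • v) := by
    have := expSeries_hasSum_exp (𝕂 := ℂ) μ
    have h2 : HasSum (fun k : ℕ => (k.factorial⁻¹ : ℂ) * μ ^ k) (NormedSpace.exp μ) := by
      refine this.congr_fun ?_
      intro k; simp only [expSeries_apply_eq]; simp [smul_eq_mul]
    exact h2.smul_const v
  rw [← Complex.exp_eq_exp_ℂ] at hsc
  exact hsum3.unique hsc

lemma exp_mem_adjoin (B : Matrix (Fin n) (Fin n) ℂ) : NormedSpace.exp B ∈ Algebra.adjoin ℂ {B} := by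
  have hclosed : IsClosed ((Subalgebra.toSubmodule (Algebra.adjoin ℂ {B}) : Submodule ℂ _) :
      Set (Matrix (Fin n) (Fin n) ℂ)) :=
    Submodule.closed_of_finiteDimensional _
  have hsum := expSeries_hasSum_exp (𝕂 := ℂ) B
  have := hsum.tendsto_sum_nat
  refine hclosed.mem_of_tendsto this (Filter.Eventually.of_forall fun s => ?_)
  refine Submodule.sum_mem _ fun k _ => ?_
  simp only [expSeries_apply_eq]
  exact Submodule.smul_mem _ _ (Subalgebra.pow_mem _ (Algebra.self_mem_adjoin_singleton ℂ B) k)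

lemma spectrum_exp_subset [Nonempty (Fin n)] (B : Matrix (Fin n) (Fin n) ℂ) :
    spectrum ℂ (NormedSpace.exp B) ⊆ (fun μ => Complex.exp μ) '' spectrum ℂ B := by
  have hmem := exp_mem_adjoin B
  rw [Algebra.adjoin_singleton_eq_range_aeval] at hmem
  obtain ⟨q, hq⟩ := hmem
  rw [AlgHom.toRingHom_eq_coe, RingHom.coe_coe] at hq
  have hnon : (spectrum ℂ B).Nonempty :=
    spectrum.nonempty_of_isAlgClosed_of_finiteDimensional ℂ B
  have hmap := spectrum.map_polynomial_aeval_of_nonempty B q hnon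
  rw [hq] at hmap
  rw [hmap]
  rintro - ⟨μ, hμ, rfl⟩
  refine ⟨μ, hμ, ?_⟩
  show Complex.exp μ = q.eval μ
  -- show q.eval μ = Complex.exp μ using an eigenvector
  have hEig : Module.End.HasEigenvalue (Matrix.toLinAlgEquiv' B) μ := by
    rw [Module.End.hasEigenvalue_iff_mem_spectrum, AlgEquiv.spectrum_eq]
    exact hμ
  obtain ⟨v, hv⟩ := hEig.exists_hasEigenvector
  have hv0 : v ≠ 0 := hv.right
  have hmv : B *ᵥ v = μ • v := hv.apply_eq_smul
  have h1 : NormedSpace.exp B *ᵥ v = Complex.exp μ • v := exp_mulVec B μ v hmv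
  have h2 : (Polynomial.aeval B q) *ᵥ v = q.eval μ • v := by
    have := Module.End.aeval_apply_of_hasEigenvector (p := q) hv
    have h3 : Polynomial.aeval (Matrix.toLinAlgEquiv' B) q = Matrix.toLinAlgEquiv'
        (Polynomial.aeval B q) := by
      rw [← Polynomial.aeval_algHom_apply]
    rw [h3] at this
    exact this
  rw [hq] at h2
  rw [h1] at h2
  by_contra hne
  obtain ⟨i, hi⟩ := Function.ne_iff.mp hv0
  have h5 := congrFun h2 i
  simp only [Pi.smul_apply, smul_eq_mul] at h5
  exact hne (mul_right_cancel₀ hi h5)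





lemma decay_aux (A : Matrix (Fin n) (Fin n) ℝ)
    (hA : ∀ μ ∈ spectrum ℂ (A.map (algebraMap ℝ ℂ)), μ.re < 0) :
    ∃ C, 0 < C ∧ ∃ ε, 0 < ε ∧ ∀ t, 0 ≤ t → ∀ i j,
      |NormedSpace.exp (t • A) i j| ≤ C * Real.exp (-ε * t) := by
  rcases Nat.eq_zero_or_pos n with h0 | hn
  · subst h0
    exact ⟨1, one_pos, 1, one_pos, fun t ht i j => i.elim0⟩
  haveI : Nonempty (Fin n) := ⟨⟨0, hn⟩⟩
  set B := A.map (algebraMap ℝ ℂ) with hB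
  -- maximal real part of the spectrum
  have hcpt : IsCompact (spectrum ℂ B) := spectrum.isCompact B
  have hne : (spectrum ℂ B).Nonempty :=
    spectrum.nonempty_of_isAlgClosed_of_finiteDimensional ℂ B
  obtain ⟨μ₀, hμ₀mem, hμ₀max⟩ := hcpt.exists_isMaxOn hne Complex.continuous_re.continuousOn
  set m := μ₀.re with hmdef
  have hm : m < 0 := hA μ₀ hμ₀mem
  -- spectral radius of exp B
  set ρ : ℝ≥0 := ⟨Real.exp (m / 2), (Real.exp_pos _).le⟩ with hρ
  have hρval : (ρ : ℝ) = Real.exp (m / 2) := rfl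
  have hρpos : (0 : ℝ) < ρ := Real.exp_pos _
  set a := NormedSpace.exp B with ha
  have hρlt : spectralRadius ℂ a < (ρ : ℝ≥0∞) := by
    apply spectrum.spectralRadius_lt_of_forall_lt
    intro z hz
    obtain ⟨μ, hμ, rfl⟩ := spectrum_exp_subset B hz
    rw [← NNReal.coe_lt_coe]
    simp only [coe_nnnorm, hρval]
    rw [Complex.norm_exp]
    exact Real.exp_lt_exp.mpr (lt_of_le_of_lt (hμ₀max hμ) (by linarith))
  -- Gelfand formula gives eventual geometric bound
  have hg := spectrum.pow_nnnorm_pow_one_div_tendsto_nhds_spectralRadius a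
  have hev : ∀ᶠ k : ℕ in Filter.atTop, (‖a ^ k‖₊ : ℝ≥0∞) ^ (1 / (k : ℝ)) < (ρ : ℝ≥0∞) :=
    hg.eventually_lt_const hρlt
  obtain ⟨N, hN⟩ := Filter.eventually_atTop.mp hev
  have hpow : ∀ k, N ≤ k → 1 ≤ k → ‖a ^ k‖ ≤ (ρ : ℝ) ^ k := by
    intro k hk h1
    have hk0 : (k : ℝ) ≠ 0 := Nat.cast_ne_zero.mpr (by omega)
    have h2 := ENNReal.rpow_lt_rpow (hN k hk) (by positivity : (0:ℝ) < (k:ℝ))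
    rw [← ENNReal.rpow_mul, one_div, inv_mul_cancel₀ hk0, ENNReal.rpow_one,
      ENNReal.rpow_natCast, ← ENNReal.coe_pow, ENNReal.coe_lt_coe] at h2
    have := le_of_lt h2
    rw [← NNReal.coe_le_coe] at this
    simpa using this
  -- uniform geometric bound
  set C₂ : ℝ := 1 + ∑ k ∈ Finset.range (max N 1), ‖a ^ k‖ / (ρ : ℝ) ^ k with hC₂def
  have hsum_nonneg : (0:ℝ) ≤ ∑ k ∈ Finset.range (max N 1), ‖a ^ k‖ / (ρ : ℝ) ^ k :=
    Finset.sum_nonneg fun k _ => by positivity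
  have hC₂one : (1:ℝ) ≤ C₂ := by simp [hC₂def]; linarith
  have hC₂pos : (0:ℝ) < C₂ := lt_of_lt_of_le one_pos hC₂one
  have hgeom : ∀ k : ℕ, ‖a ^ k‖ ≤ C₂ * (ρ : ℝ) ^ k := by
    intro k
    rcases lt_or_ge k (max N 1) with h | h
    · have hle : ‖a ^ k‖ / (ρ : ℝ) ^ k ≤ ∑ l ∈ Finset.range (max N 1), ‖a ^ l‖ / (ρ : ℝ) ^ l :=
        Finset.single_le_sum (f := fun l => ‖a ^ l‖ / (ρ : ℝ) ^ l) (fun l _ => by positivity) (Finset.mem_range.mpr h)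
      have hρk : (0:ℝ) < (ρ : ℝ) ^ k := by positivity
      calc ‖a ^ k‖ = ‖a ^ k‖ / (ρ : ℝ) ^ k * (ρ : ℝ) ^ k := by field_simp
        _ ≤ C₂ * (ρ : ℝ) ^ k := by
            apply mul_le_mul_of_nonneg_right _ hρk.le
            calc ‖a ^ k‖ / (ρ : ℝ) ^ k ≤ _ := hle
              _ ≤ C₂ := by linarith
    · have h1 := hpow k (le_trans (le_max_left _ _) h) (le_trans (le_max_right _ _) h)
      exact le_trans h1 (le_mul_of_one_le_left (by positivity) hC₂one)
  -- bound on the compact piece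
  have hcont : ContinuousOn (fun s : ℝ => NormedSpace.exp (s • B)) (Set.Icc 0 1) :=
    (exp_continuous.comp (continuous_id.smul continuous_const)).continuousOn
  obtain ⟨M₀, hM₀⟩ := isCompact_Icc.exists_bound_of_continuousOn hcont
  have hM₀0 : (0:ℝ) ≤ M₀ := le_trans (norm_nonneg _) (hM₀ 0 (by constructor <;> norm_num))
  -- final constants
  set ε : ℝ := -(m / 2) with hεdef
  have hε : 0 < ε := by simp [hεdef]; linarith
  set C : ℝ := (M₀ + 1) * C₂ * Real.exp ε with hCdef
  have hC : 0 < C := by positivity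
  have key : ∀ t, 0 ≤ t → ‖NormedSpace.exp (t • B)‖ ≤ C * Real.exp (-ε * t) := by
    intro t ht
    set k := ⌊t⌋₊ with hk
    set s := t - k with hs
    have hs0 : 0 ≤ s := sub_nonneg.mpr (Nat.floor_le ht)
    have hs1 : s ≤ 1 := by
      have := Nat.lt_floor_add_one t
      simp only [hs]; linarith
    have hsplit : t • B = s • B + (k : ℝ) • B := by
      rw [← add_smul]; congr 1; simp [hs]
    have hcomm : Commute (s • B) ((k : ℝ) • B) :=
      ((Commute.refl B).smul_left s).smul_right (k : ℝ)
    have hexp : NormedSpace.exp (t • B) = NormedSpace.exp (s • B) * a ^ k := by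
      erw [hsplit, exp_add_of_commute hcomm]
      congr 1
      rw [Nat.cast_smul_eq_nsmul ℝ k B, NormedSpace.exp_nsmul]; rfl
    have hρk : ((ρ : ℝ)) ^ k = Real.exp ((k : ℝ) * (m / 2)) := by
      rw [hρval, ← Real.exp_nat_mul]
    have h1 : Real.exp ((k : ℝ) * (m / 2)) ≤ Real.exp ε * Real.exp (-ε * t) := by
      rw [← Real.exp_add]
      apply Real.exp_le_exp.mpr
      have hks : (k : ℝ) = t - s := by simp [hs]
      rw [hks, hεdef]
      nlinarith
    calc ‖NormedSpace.exp (t • B)‖ ≤ ‖NormedSpace.exp (s • B)‖ * ‖a ^ k‖ := by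
          rw [hexp]; exact norm_mul_le _ _
      _ ≤ M₀ * (C₂ * (ρ : ℝ) ^ k) := by
          apply mul_le_mul (hM₀ s ⟨hs0, hs1⟩) (hgeom k) (norm_nonneg _) hM₀0
      _ ≤ (M₀ + 1) * (C₂ * (Real.exp ε * Real.exp (-ε * t))) := by
          apply mul_le_mul (by linarith) ?_ (by positivity) (by linarith)
          rw [hρk]
          exact mul_le_mul_of_nonneg_left h1 hC₂pos.le
      _ = C * Real.exp (-ε * t) := by rw [hCdef]; ring
  refine ⟨C, hC, ε, hε, fun t ht i j => ?_⟩
  have hmcont : Continuous fun M : Matrix (Fin n) (Fin n) ℝ => M.map (algebraMap ℝ ℂ) :=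
    Continuous.matrix_map continuous_id (continuous_algebraMap ℝ ℂ)
  have hmap := map_exp ((algebraMap ℝ ℂ).mapMatrix) hmcont (t • A)
  rw [RingHom.mapMatrix_apply, RingHom.mapMatrix_apply] at hmap
  have hsm : (t • A).map (algebraMap ℝ ℂ) = t • B := by
    ext i' j'
    simp only [Matrix.map_apply, Matrix.smul_apply, Complex.real_smul, hB, smul_eq_mul,
      _root_.map_mul]
    norm_num [Complex.ofReal_mul]
  have hRC : NormedSpace.exp (t • B) = NormedSpace.exp (t • B) := rfl
  have h1 : (NormedSpace.exp (t • A)).map (algebraMap ℝ ℂ) = NormedSpace.exp (t • B) := by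
    erw [hmap, hsm, hRC]
  have h2 : |NormedSpace.exp (t • A) i j| = ‖(NormedSpace.exp (t • B)) i j‖ := by
    rw [← h1]
    simp [Matrix.map_apply]
  rw [h2]
  exact le_trans (entry_le_norm _ i j) (key t ht)
lemma F_hasDerivAt_aux (A : Matrix (Fin n) (Fin n) ℝ) (t : ℝ) (i j : Fin n) :
    HasDerivAt (fun t : ℝ => (NormedSpace.exp (t • Aᵀ) * NormedSpace.exp (t • A)) i j)
      ((Aᵀ * (NormedSpace.exp (t • Aᵀ) * NormedSpace.exp (t • A)) + (NormedSpace.exp (t • Aᵀ) * NormedSpace.exp (t • A)) * A) i j) t := by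
  have h1 := hasDerivAt_exp_smul_const (𝕂 := ℝ) Aᵀ t
  have h2 := hasDerivAt_exp_smul_const (𝕂 := ℝ) A t
  have hmul := h1.mul h2
  have hcommT : NormedSpace.exp (t • Aᵀ) * Aᵀ = Aᵀ * NormedSpace.exp (t • Aᵀ) :=
    (((Commute.refl Aᵀ).smul_right t).exp_right).eq.symm
  have hD : NormedSpace.exp (t • Aᵀ) * Aᵀ * NormedSpace.exp (t • A) + NormedSpace.exp (t • Aᵀ) * (NormedSpace.exp (t • A) * A)
      = Aᵀ * (NormedSpace.exp (t • Aᵀ) * NormedSpace.exp (t • A)) + (NormedSpace.exp (t • Aᵀ) * NormedSpace.exp (t • A)) * A := by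
    rw [hcommT]
    noncomm_ring
  erw [hD] at hmul
  let φ : Matrix (Fin n) (Fin n) ℝ →ₗ[ℝ] ℝ :=
    { toFun := fun M => M i j
      map_add' := fun _ _ => rfl
      map_smul' := fun _ _ => rfl }
  have := φ.toContinuousLinearMap.hasFDerivAt.comp_hasDerivAt t hmul
  exact this

lemma exp_cont_aux (A : Matrix (Fin n) (Fin n) ℝ) (i j : Fin n) :
    Continuous fun t : ℝ => (NormedSpace.exp (t • Aᵀ) * NormedSpace.exp (t • A)) i j := by
  exact continuous_iff_continuousAt.mpr fun t => (F_hasDerivAt_aux A t i j).continuousAt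

end Aux

/-- bridge: entry decay, instance-clean. -/
theorem decay {n : ℕ} (A : Matrix (Fin n) (Fin n) ℝ)
    (hA : ∀ μ ∈ spectrum ℂ (A.map (algebraMap ℝ ℂ)), μ.re < 0) :
    ∃ C, 0 < C ∧ ∃ ε, 0 < ε ∧ ∀ t, 0 ≤ t → ∀ i j,
      |NormedSpace.exp (t • A) i j| ≤ C * Real.exp (-ε * t) :=
  decay_aux A hA

theorem F_hasDerivAt {n : ℕ} (A : Matrix (Fin n) (Fin n) ℝ) (t : ℝ) (i j : Fin n) :
    HasDerivAt (fun t : ℝ => (NormedSpace.exp (t • Aᵀ) * NormedSpace.exp (t • A)) i j)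
      ((Aᵀ * (NormedSpace.exp (t • Aᵀ) * NormedSpace.exp (t • A)) + (NormedSpace.exp (t • Aᵀ) * NormedSpace.exp (t • A)) * A) i j) t :=
  F_hasDerivAt_aux A t i j

end LyapunovAux
/-- **Lyapunov lemma**: if all complex eigenvalues of the real matrix `A` have negative
real part (`A` is Hurwitz), then `t ↦ e^{tAᵀ}e^{tA}` is integrable (entrywise) on
`[0,∞)`, and the matrix `P = ∫₀^∞ e^{tAᵀ}e^{tA} dt` is symmetric positive definite and
satisfies the Lyapunov equation `AᵀP + PA = −Iₙ`. -/
theorem lyapunov_lemma {n : ℕ} (A : Matrix (Fin n) (Fin n) ℝ)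
    (hA : ∀ μ ∈ spectrum ℂ (A.map (algebraMap ℝ ℂ)), μ.re < 0) :
    (∀ i j, IntegrableOn
        (fun t : ℝ => (NormedSpace.exp (t • Aᵀ) * NormedSpace.exp (t • A)) i j) (Set.Ici 0)) ∧
    ∀ P : Matrix (Fin n) (Fin n) ℝ,
      (∀ i j, P i j = ∫ t in Set.Ici (0:ℝ), (NormedSpace.exp (t • Aᵀ) * NormedSpace.exp (t • A)) i j) →
      Pᵀ = P ∧ P.PosDef ∧ Aᵀ * P + P * A = -1 := by
  obtain ⟨C, hC, ε, hε, hdecay⟩ := LyapunovAux.decay A hA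
  set F : ℝ → Matrix (Fin n) (Fin n) ℝ := fun t => NormedSpace.exp (t • Aᵀ) * NormedSpace.exp (t • A) with hF
  have hTrans : ∀ t : ℝ, NormedSpace.exp (t • Aᵀ) = (NormedSpace.exp (t • A))ᵀ := fun t => by
    rw [← Matrix.transpose_smul, Matrix.exp_transpose]
  have hFentry : ∀ (t : ℝ) (i j : Fin n),
      F t i j = ∑ k, NormedSpace.exp (t • A) k i * NormedSpace.exp (t • A) k j := by
    intro t i j
    show (NormedSpace.exp (t • Aᵀ) * NormedSpace.exp (t • A)) i j = _
    rw [hTrans]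
    simp only [Matrix.mul_apply, Matrix.transpose_apply]
  have hFsymm : ∀ (t : ℝ) (i j : Fin n), F t i j = F t j i := by
    intro t i j; rw [hFentry, hFentry]
    exact Finset.sum_congr rfl fun k _ => mul_comm _ _
  have hFbound : ∀ t, 0 ≤ t → ∀ i j, |F t i j| ≤ (n * (C * C)) * Real.exp (-(2 * ε) * t) := by
    intro t ht i j
    rw [hFentry]
    calc |∑ k, NormedSpace.exp (t • A) k i * NormedSpace.exp (t • A) k j|
        ≤ ∑ k, |NormedSpace.exp (t • A) k i * NormedSpace.exp (t • A) k j| := Finset.abs_sum_le_sum_abs _ _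
      _ ≤ ∑ _k : Fin n, (C * Real.exp (-ε * t)) * (C * Real.exp (-ε * t)) := by
          apply Finset.sum_le_sum; intro k _
          rw [abs_mul]
          exact mul_le_mul (hdecay t ht k i) (hdecay t ht k j) (abs_nonneg _)
            (le_trans (abs_nonneg _) (hdecay t ht k i))
      _ = (n * (C * C)) * Real.exp (-(2 * ε) * t) := by
          rw [Finset.sum_const, Finset.card_univ, Fintype.card_fin, nsmul_eq_mul,
            show (-(2 * ε) * t) = (-ε * t) + (-ε * t) by ring, Real.exp_add]
          ring
  have hFcont : ∀ i j, Continuous fun t => F t i j := fun i j =>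
    continuous_iff_continuousAt.mpr fun t => (LyapunovAux.F_hasDerivAt A t i j).continuousAt
  have hmaj0 : IntegrableOn (fun t : ℝ => Real.exp (-(2 * ε) * t)) (Ici 0) := by
    rw [integrableOn_Ici_iff_integrableOn_Ioi]
    exact exp_neg_integrableOn_Ioi 0 (by positivity)
  have hmaj : IntegrableOn (fun t : ℝ => (n * (C * C)) * Real.exp (-(2 * ε) * t)) (Ici 0) :=
    hmaj0.const_mul _
  have hInt : ∀ i j, IntegrableOn (fun t => F t i j) (Ici 0) := by
    intro i j
    refine hmaj.mono' ((hFcont i j).aestronglyMeasurable.restrict) ?_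
    refine (ae_restrict_iff' measurableSet_Ici).mpr (Filter.Eventually.of_forall fun t ht => ?_)
    rw [Real.norm_eq_abs]
    exact hFbound t ht i j
  refine ⟨hInt, fun P hP => ?_⟩
  have hPsymm : Pᵀ = P := by
    ext i j
    rw [Matrix.transpose_apply, hP j i, hP i j]
    exact integral_congr_ae (Filter.Eventually.of_forall fun t => hFsymm t j i)
  refine ⟨hPsymm, posDef_iff_dotProduct_mulVec.mpr ⟨?_, ?_⟩, ?_⟩
  · -- IsHermitian
    show Pᴴ = P
    rw [Matrix.conjTranspose]
    ext i j; simpa using congrFun (congrFun hPsymm i) j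
  · -- positivity
    intro x hx
    set g : ℝ → ℝ := fun t => ∑ i, ∑ j, x i * F t i j * x j with hg
    have hgint : IntegrableOn g (Ici 0) :=
      integrable_finset_sum _ fun i _ => integrable_finset_sum _ fun j _ =>
        (((hInt i j).const_mul (x i)).mul_const (x j))
    have hquad : x ⬝ᵥ P.mulVec x = ∫ t in Ici (0:ℝ), g t := by
      have h1 : x ⬝ᵥ P.mulVec x = ∑ i, ∑ j, x i * P i j * x j := by
        simp [Matrix.mulVec, dotProduct, Finset.mul_sum, mul_assoc]
      rw [h1]
      calc ∑ i, ∑ j, x i * P i j * x j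
          = ∑ i, ∑ j, ∫ t in Ici (0:ℝ), x i * F t i j * x j := by
            refine Finset.sum_congr rfl fun i _ => Finset.sum_congr rfl fun j _ => ?_
            rw [hP i j, ← integral_const_mul, ← integral_mul_const]
        _ = ∫ t in Ici (0:ℝ), g t := by
            rw [integral_finset_sum _ fun i _ => integrable_finset_sum _ fun j _ =>
              (((hInt i j).const_mul (x i)).mul_const (x j))]
            refine Finset.sum_congr rfl fun i _ => ?_
            rw [integral_finset_sum _ fun j _ => (((hInt i j).const_mul (x i)).mul_const (x j))]
    have hgF : ∀ t, g t = (NormedSpace.exp (t • A) *ᵥ x) ⬝ᵥ (NormedSpace.exp (t • A) *ᵥ x) := by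
      intro t
      have h1 : g t = x ⬝ᵥ (F t *ᵥ x) := by
        simp [hg, Matrix.mulVec, dotProduct, Finset.mul_sum, mul_assoc]
      have hFt : F t = (NormedSpace.exp (t • A))ᵀ * NormedSpace.exp (t • A) := by
        show NormedSpace.exp (t • Aᵀ) * NormedSpace.exp (t • A) = _
        rw [hTrans]
      rw [h1, hFt]
      rw [← Matrix.mulVec_mulVec, dotProduct_mulVec, Matrix.vecMul_transpose]
    have hgnonneg : ∀ t, 0 ≤ g t := fun t => by
      rw [hgF]
      exact Finset.sum_nonneg fun k _ => mul_self_nonneg _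
    have hg0 : 0 < g 0 := by
      rw [hgF]
      have h0 : NormedSpace.exp ((0:ℝ) • A) = 1 := by rw [zero_smul, exp_zero]
      rw [h0, Matrix.one_mulVec]
      obtain ⟨i, hi⟩ := Function.ne_iff.mp hx
      exact Finset.sum_pos' (fun k _ => mul_self_nonneg _)
        ⟨i, Finset.mem_univ i, mul_self_pos.mpr hi⟩
    have hgcont : Continuous g :=
      continuous_finset_sum _ fun i _ => continuous_finset_sum _ fun j _ =>
        ((continuous_const.mul (hFcont i j)).mul continuous_const)
    have hpos : 0 < ∫ t in Ici (0:ℝ), g t := by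
      rw [setIntegral_pos_iff_support_of_nonneg_ae
        ((ae_restrict_iff' measurableSet_Ici).mpr (Filter.Eventually.of_forall fun t _ => hgnonneg t))
        hgint]
      obtain ⟨δ, hδ, hball⟩ := Metric.isOpen_iff.mp
        (hgcont.isOpen_preimage _ isOpen_Ioi) 0 hg0
      refine lt_of_lt_of_le ?_ (measure_mono (?_ : Ico (0:ℝ) δ ⊆ Function.support g ∩ Ici 0))
      · rw [Real.volume_Ico]
        simpa using ENNReal.ofReal_pos.mpr hδ
      · rintro t ⟨ht0, htδ⟩
        refine ⟨ne_of_gt (hball ?_), ht0⟩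
        simp only [Metric.mem_ball, Real.dist_eq, sub_zero]
        rw [abs_of_nonneg ht0]
        exact htδ
    show 0 < star x ⬝ᵥ P.mulVec x
    rw [star_trivial]
    rw [hquad]
    exact hpos
  · -- Lyapunov equation
    have hDint : ∀ i j, IntegrableOn (fun t => (Aᵀ * F t + F t * A) i j) (Ici 0) := by
      intro i j
      have heq : (fun t => (Aᵀ * F t + F t * A) i j)
          = fun t => (∑ k, Aᵀ i k * F t k j) + ∑ k, F t i k * A k j := by
        funext t; simp [Matrix.add_apply, Matrix.mul_apply]
      rw [heq]
      exact (integrable_finset_sum _ fun k _ => (hInt k j).const_mul _).add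
        (integrable_finset_sum _ fun k _ => (hInt i k).mul_const _)
    have hlim : ∀ i j, Filter.Tendsto (fun T => F T i j) Filter.atTop (𝓝 0) := by
      have h1 : Filter.Tendsto (fun t : ℝ => (2 * ε) * t) Filter.atTop Filter.atTop :=
        Filter.Tendsto.const_mul_atTop (by positivity) Filter.tendsto_id
      have h2 := Real.tendsto_exp_neg_atTop_nhds_zero.comp h1
      have h3 : Filter.Tendsto (fun t : ℝ => Real.exp (-(2 * ε) * t)) Filter.atTop (𝓝 0) := by
        refine h2.congr fun t => ?_
        simp [Function.comp, neg_mul]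
      have hexp0 : Filter.Tendsto (fun t : ℝ => (n * (C * C)) * Real.exp (-(2 * ε) * t))
          Filter.atTop (𝓝 0) := by
        simpa using h3.const_mul (n * (C * C) : ℝ)
      intro i j
      exact squeeze_zero_norm' (Filter.eventually_atTop.mpr ⟨0, fun t ht => by
        rw [Real.norm_eq_abs]; exact hFbound t ht i j⟩) hexp0
    have hkey : ∀ i j, (∫ t in Ici (0:ℝ), (Aᵀ * F t + F t * A) i j)
        = -(1 : Matrix (Fin n) (Fin n) ℝ) i j := by
      intro i j
      rw [integral_Ici_eq_integral_Ioi]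
      have htendsto := intervalIntegral_tendsto_integral_Ioi 0
        ((hDint i j).mono_set Set.Ioi_subset_Ici_self) (Filter.tendsto_id (α := ℝ))
      have heq : ∀ᶠ T in Filter.atTop, (∫ t in (0:ℝ)..(id T), (Aᵀ * F t + F t * A) i j)
          = F T i j - F 0 i j := by
        refine Filter.eventually_atTop.mpr ⟨0, fun T hT => ?_⟩
        show ∫ t in (0:ℝ)..(id T), (fun t => (Aᵀ * F t + F t * A) i j) t
            = (fun T => F T i j) (id T) - (fun T => F T i j) 0
        refine intervalIntegral.integral_eq_sub_of_hasDerivAt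
          (f := fun T => F T i j) (f' := fun t => (Aᵀ * F t + F t * A) i j)
          (fun t _ => LyapunovAux.F_hasDerivAt A t i j) ?_
        apply MeasureTheory.IntegrableOn.intervalIntegrable
        apply (hDint i j).mono_set
        rw [show id T = T from rfl, Set.uIcc_of_le hT]
        exact Set.Icc_subset_Ici_self
      have h2 : Filter.Tendsto (fun T => F T i j - F 0 i j) Filter.atTop (𝓝 (0 - F 0 i j)) :=
        (hlim i j).sub_const _
      have hval := tendsto_nhds_unique (Filter.Tendsto.congr' heq htendsto) h2
      rw [hval]
      have hF0 : F 0 = 1 := by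
        show NormedSpace.exp ((0:ℝ) • Aᵀ) * NormedSpace.exp ((0:ℝ) • A) = 1
        rw [zero_smul, zero_smul, exp_zero, one_mul]
      rw [hF0]
      simp [Matrix.neg_apply]
    ext i j
    rw [Matrix.add_apply, Matrix.mul_apply, Matrix.mul_apply]
    have e1 : ∀ k, Aᵀ i k * P k j = ∫ t in Ici (0:ℝ), Aᵀ i k * F t k j := fun k => by
      rw [hP k j, ← integral_const_mul]
    have e2 : ∀ k, P i k * A k j = ∫ t in Ici (0:ℝ), F t i k * A k j := fun k => by
      rw [hP i k, ← integral_mul_const]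
    simp_rw [e1, e2]
    rw [← integral_finset_sum _ fun k _ => (hInt k j).const_mul _,
      ← integral_finset_sum _ fun k _ => (hInt i k).mul_const _,
      ← integral_add (integrable_finset_sum _ fun k _ => (hInt k j).const_mul _)
        (integrable_finset_sum _ fun k _ => (hInt i k).mul_const _)]
    have := hkey i j
    rw [show (fun t => (∑ k, Aᵀ i k * F t k j) + ∑ k, F t i k * A k j)
        = fun t => (Aᵀ * F t + F t * A) i j from by
      funext t; simp [Matrix.add_apply, Matrix.mul_apply]]
    rw [this]
    simp [Matrix.neg_apply]
end

section
/- Jurdjevic–Quinn stabilization theorem: Consider the control-affine system ẋ(t) = f(x(t)) + Σ_{i=1}^m uᵢ(t) gᵢ(x(t)) in ℝⁿ, where f, g₁, …, g_m : ℝⁿ → ℝⁿ are C^∞ vector fields, and let x̄ satisfy f(x̄) = 0. Assume there exists a C^∞ function V : ℝⁿ → ℝ such that: (i) V(x̄) = 0 and V(x) > 0 for every x ≠ x̄; (ii) V is proper (the preimage of every compact set is compact; equivalently V(x) → +∞ as ‖x‖ → +∞); (iii) L_fV(x) ≤ 0 for every x ∈ ℝⁿ; (iv) the set { x ∈ ℝⁿ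 : L_fV(x) = 0 and L_f^k L_{gᵢ}V(x) = 0 for every i ∈ {1,…,m} and every k ∈ ℕ } equals {x̄}. Define the feedback uᵢ(x) = −L_{gᵢ}V(x) and the closed-loop vector field F(x) = f(x) − Σ_{i=1}^m L_{gᵢ}V(x) gᵢ(x). Then x̄ is globally asymptotically stable in ℝⁿ for ẋ = F(x): every maximal solution of ẋ = F(x) is defined on [0,∞) and converges to x̄ as t → +∞, and for every ε > 0 there exists δ > 0 such that every solution with ‖x(0) − x̄‖ ≤ δ satisfies ‖x(t) − x̄‖ ≤ ε for all t ≥ 0. -/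
open MeasureTheory Set Filter

/-- The Lie derivative of a function `W : ℝⁿ → ℝ` along a vector field `X : ℝⁿ → ℝⁿ`:
`L_X W (x) = dW(x)·X(x)`. -/
noncomputable def lieD {n : ℕ} (X : (Fin n → ℝ) → Fin n → ℝ) (W : (Fin n → ℝ) → ℝ) :
    (Fin n → ℝ) → ℝ :=
  fun x => fderiv ℝ W x (X x)

/-- A global solution of `ẋ = F(x)` on `[0,∞)`, understood in integral form. -/
def GlobalSol {n : ℕ} (F : (Fin n → ℝ) → Fin n → ℝ) (x : ℝ → Fin n → ℝ) : Prop :=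
  ContinuousOn x (Set.Ici 0) ∧
    ∀ t ≥ (0:ℝ), x t = x 0 + ∫ s in (0:ℝ)..t, F (x s)

section JQlemmas

open Topology

lemma JQlieD_contDiff {n : ℕ} {X : (Fin n → ℝ) → Fin n → ℝ} {W : (Fin n → ℝ) → ℝ}
    (hX : ContDiff ℝ (⊤ : ℕ∞) X) (hW : ContDiff ℝ (⊤ : ℕ∞) W) : ContDiff ℝ (⊤ : ℕ∞) (lieD X W) :=
  (hW.fderiv_right (by simp)).clm_apply hX

lemma JQiter_contDiff {n : ℕ} {X : (Fin n → ℝ) → Fin n → ℝ} {W : (Fin n → ℝ) → ℝ}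
    (hX : ContDiff ℝ (⊤ : ℕ∞) X) (hW : ContDiff ℝ (⊤ : ℕ∞) W) (k : ℕ) :
    ContDiff ℝ (⊤ : ℕ∞) ((lieD X)^[k] W) := by
  induction k generalizing W with
  | zero => exact hW
  | succ k ih =>
    rw [Function.iterate_succ_apply]
    exact ih (JQlieD_contDiff hX hW)

variable {n : ℕ} {F : (Fin n → ℝ) → Fin n → ℝ} {x : ℝ → Fin n → ℝ}

/-- FTC: a `GlobalSol` has right-derivative `F (x t)` at every `t ≥ 0`. -/
lemma JQderivWithin (hFc : Continuous F) (hx : GlobalSol F x) :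
    ∀ t ≥ (0:ℝ), HasDerivWithinAt x (F (x t)) (Ici t) t := by
  obtain ⟨hxc, hxi⟩ := hx
  have hq : ContinuousOn (fun s => F (x s)) (Ici 0) := hFc.comp_continuousOn hxc
  intro t ht
  have hIoi : Ioi t ⊆ Ici (0:ℝ) := fun s hs => le_trans ht (le_of_lt hs)
  have hint : IntervalIntegrable (fun s => F (x s)) volume 0 t :=
    (hq.mono (by rw [uIcc_of_le ht]; exact Icc_subset_Ici_self)).intervalIntegrable
  have hmeas : StronglyMeasurableAtFilter (fun s => F (x s)) (𝓝[Ioi t] t) volume :=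
    (hq.mono hIoi).stronglyMeasurableAtFilter_nhdsWithin measurableSet_Ioi t
  have hcw : ContinuousWithinAt (fun s => F (x s)) (Ioi t) t := (hq t ht).mono hIoi
  have hphi : HasDerivWithinAt (fun u => x 0 + ∫ s in (0:ℝ)..u, F (x s)) (F (x t)) (Ici t) t :=
    (intervalIntegral.integral_hasDerivWithinAt_right hint hmeas hcw).const_add (x 0)
  exact hphi.congr (fun u hu => hxi u (le_trans ht hu)) (hxi t ht)

lemma JQderivAt (hFc : Continuous F) (hx : GlobalSol F x) :
    ∀ t > (0:ℝ), HasDerivAt x (F (x t)) t := by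
  obtain ⟨hxc, hxi⟩ := hx
  have hq : ContinuousOn (fun s => F (x s)) (Ici 0) := hFc.comp_continuousOn hxc
  intro t ht
  have hnhds : Ici (0:ℝ) ∈ 𝓝 t := mem_of_superset (Ioi_mem_nhds ht) Ioi_subset_Ici_self
  have hint : IntervalIntegrable (fun s => F (x s)) volume 0 t :=
    (hq.mono (by rw [uIcc_of_le ht.le]; exact Icc_subset_Ici_self)).intervalIntegrable
  have hmeas : StronglyMeasurableAtFilter (fun s => F (x s)) (𝓝 t) volume :=
    ⟨Ici 0, hnhds, hq.aestronglyMeasurable measurableSet_Ici⟩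
  have hc : ContinuousAt (fun s => F (x s)) t := hq.continuousAt hnhds
  have hphi : HasDerivAt (fun u => x 0 + ∫ s in (0:ℝ)..u, F (x s)) (F (x t)) t :=
    (intervalIntegral.integral_hasDerivAt_right hint hmeas hc).const_add (x 0)
  refine hphi.congr_of_eventuallyEq ?_
  filter_upwards [hnhds] with u hu
  exact hxi u hu

/-- V is nonincreasing along curves whose derivative is a field G with `dV(G) ≤ 0`. -/
lemma JQantitone {V : (Fin n → ℝ) → ℝ} (hV : ContDiff ℝ (⊤ : ℕ∞) V)
    {z : ℝ → Fin n → ℝ} {G : (Fin n → ℝ) → Fin n → ℝ}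
    (hzc : ContinuousOn z (Ici 0)) (hz : ∀ t > (0:ℝ), HasDerivAt z (G (z t)) t)
    (hG : ∀ p, fderiv ℝ V p (G p) ≤ 0) : AntitoneOn (V ∘ z) (Ici 0) := by
  have hd : ∀ t ∈ interior (Ici (0:ℝ)), HasDerivAt (V ∘ z) (fderiv ℝ V (z t) (G (z t))) t := by
    intro t ht
    rw [interior_Ici] at ht
    exact ((hV.differentiable (by simp) (z t)).hasFDerivAt).comp_hasDerivAt t (hz t ht)
  refine antitoneOn_of_deriv_nonpos (convex_Ici 0) (hV.continuous.comp_continuousOn hzc) ?_ ?_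
  · exact fun t ht => (hd t ht).differentiableAt.differentiableWithinAt
  · intro t ht
    rw [(hd t ht).deriv]
    exact hG (z t)

/-- Global existence for a globally Lipschitz, bounded vector field. -/
lemma JQglobal_exist {E : Type*} [NormedAddCommGroup E] [NormedSpace ℝ E] [CompleteSpace E]
    {Ft : E → E} {L : NNReal} {C : ℝ} (hL : LipschitzWith L Ft) (hC : ∀ z, ‖Ft z‖ ≤ C)
    (p : E) : ∃ y : ℝ → E, y 0 = p ∧ ∀ t, HasDerivAt y (Ft (y t)) t := by
  have hC0 : 0 ≤ C := le_trans (norm_nonneg _) (hC p)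
  have hpl : ∀ k : ℕ, IsPicardLindelof (fun _ z => Ft z) (tmin := -((k:ℝ)+1)) (tmax := (k:ℝ)+1)
      ⟨0, by constructor <;> linarith [Nat.cast_nonneg (α := ℝ) k]⟩ p
      (C.toNNReal * ((k:NNReal)+1)) 0 C.toNNReal L := by
    intro k
    refine ⟨fun t _ => hL.lipschitzOnWith, fun z _ => continuousOn_const,
      fun t _ z _ => (hC z).trans (Real.le_coe_toNNReal C), ?_⟩
    simp only [NNReal.coe_mul, NNReal.coe_add, NNReal.coe_natCast, NNReal.coe_one,
      NNReal.coe_zero, sub_zero, zero_sub, neg_neg, max_self, le_refl]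
  choose sol hsol0 hsol using fun k => (hpl k).exists_eq_forall_mem_Icc_hasDerivWithinAt₀
  have hsol0 : ∀ k, sol k 0 = p := hsol0
  have hsolD : ∀ k : ℕ, ∀ t ∈ Ioo (-((k:ℝ)+1)) ((k:ℝ)+1), HasDerivAt (sol k) (Ft (sol k t)) t :=
    fun k t ht => (hsol k t (Ioo_subset_Icc_self ht)).hasDerivAt (Icc_mem_nhds ht.1 ht.2)
  have heq : ∀ j k : ℕ, ∀ t : ℝ, |t| < (j:ℝ)+1 → |t| < (k:ℝ)+1 → sol j t = sol k t := by
    intro j k t htj htk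
    set m : ℝ := min ((j:ℝ)+1) ((k:ℝ)+1) with hm
    have hm0 : 0 < m := lt_min (by positivity) (by positivity)
    have hsub1 : Ioo (-m) m ⊆ Ioo (-((j:ℝ)+1)) ((j:ℝ)+1) :=
      Ioo_subset_Ioo (neg_le_neg (min_le_left _ _)) (min_le_left _ _)
    have hsub2 : Ioo (-m) m ⊆ Ioo (-((k:ℝ)+1)) ((k:ℝ)+1) :=
      Ioo_subset_Ioo (neg_le_neg (min_le_right _ _)) (min_le_right _ _)
    have := ODE_solution_unique_of_mem_Ioo
      (v := fun _ z => Ft z) (s := fun _ => (univ : Set E))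
      (fun _ _ => hL.lipschitzOnWith) (t₀ := 0) (a := -m) (b := m)
      ⟨neg_lt_zero.2 hm0, hm0⟩
      (fun u hu => ⟨hsolD j u (hsub1 hu), mem_univ _⟩)
      (fun u hu => ⟨hsolD k u (hsub2 hu), mem_univ _⟩)
      ((hsol0 j).trans (hsol0 k).symm)
    exact this (abs_lt.1 (lt_min htj htk) : t ∈ Ioo (-m) m)
  refine ⟨fun t => sol ⌈|t|⌉₊ t, ?_, ?_⟩
  · show sol ⌈|(0:ℝ)|⌉₊ 0 = p
    have h0 : ⌈|(0:ℝ)|⌉₊ = 0 := by norm_num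
    rw [h0, hsol0]
  · intro t
    set k := ⌈|t|⌉₊ with hk
    have htk : t ∈ Ioo (-((k:ℝ)+1)) ((k:ℝ)+1) := by
      have h1 : |t| ≤ (k:ℝ) := Nat.le_ceil _
      constructor <;> [nlinarith [abs_le.1 h1]; nlinarith [abs_le.1 h1]]
    have hev : (fun s => sol ⌈|s|⌉₊ s) =ᶠ[𝓝 t] sol k := by
      filter_upwards [IsOpen.mem_nhds isOpen_Ioo htk] with s hs
      refine heq _ k s ?_ (abs_lt.2 ⟨hs.1, hs.2⟩)
      have : |s| ≤ (⌈|s|⌉₊:ℝ) := Nat.le_ceil _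
      linarith
    have := (hsolD k t htk).congr_of_eventuallyEq hev
    rwa [show sol k t = sol ⌈|t|⌉₊ t from rfl] at this

/-- A classical solution on `[0,∞)` (two-sided derivatives) is a `GlobalSol`. -/
lemma JQtoGlobalSol (hFc : Continuous F) {z : ℝ → Fin n → ℝ} (hzc : Continuous z)
    (hz : ∀ t ≥ (0:ℝ), HasDerivAt z (F (z t)) t) : GlobalSol F z := by
  refine ⟨hzc.continuousOn, fun t ht => ?_⟩
  have hder : ∀ s ∈ uIcc (0:ℝ) t, HasDerivAt z (F (z s)) s := by
    intro s hs
    rw [uIcc_of_le ht] at hs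
    exact hz s hs.1
  have hint : IntervalIntegrable (fun s => F (z s)) volume 0 t :=
    (hFc.comp hzc).continuousOn.intervalIntegrable
  have := intervalIntegral.integral_eq_sub_of_hasDerivAt hder hint
  rw [this]; abel

/-- Grönwall comparison of a shifted `GlobalSol` with another solution of a globally
Lipschitz field agreeing with `F` along the first trajectory. -/
lemma JQgronwall {Ft : (Fin n → ℝ) → Fin n → ℝ} {L : NNReal}
    (hL : LipschitzWith L Ft) (hFc : Continuous F)
    (hx : GlobalSol F x) (hxFt : ∀ t ≥ (0:ℝ), Ft (x t) = F (x t))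
    {y : ℝ → Fin n → ℝ} (hy : ∀ t, HasDerivAt y (Ft (y t)) t)
    {a s : ℝ} (ha : 0 ≤ a) (hs : 0 ≤ s) :
    dist (x (a + s)) (y s) ≤ dist (x a) (y 0) * Real.exp (L * s) := by
  have hycont : Continuous y := continuous_iff_continuousAt.2 fun t => (hy t).continuousAt
  have hxc : ContinuousOn (fun u => x (a + u)) (Icc 0 s) := by
    refine hx.1.comp (continuous_const.add continuous_id).continuousOn fun u hu => ?_
    have h := hu.1
    show a + u ∈ Ici (0:ℝ)
    exact mem_Ici.2 (by linarith)
  have hxd : ∀ u ∈ Ico (0:ℝ) s, HasDerivWithinAt (fun u' => x (a + u'))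
      (Ft (x (a + u))) (Ici u) u := by
    intro u hu
    have hau : (0:ℝ) ≤ a + u := by linarith [hu.1]
    have h1 : HasDerivWithinAt x (Ft (x (a + u))) (Ici (a+u)) (a+u) := by
      rw [hxFt _ hau]; exact JQderivWithin hFc hx _ hau
    have hsh : HasDerivWithinAt (fun u' : ℝ => a + u') 1 (Ici u) u :=
      ((hasDerivAt_id u).const_add a).hasDerivWithinAt
    have hmaps : MapsTo (fun u' : ℝ => a + u') (Ici u) (Ici (a+u)) :=
      fun r hr => by simpa using hr
    have h2 := HasDerivWithinAt.scomp_of_eq u h1 hsh hmaps rfl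
    rw [one_smul] at h2
    exact h2
  have hyd : ∀ u ∈ Ico (0:ℝ) s, HasDerivWithinAt y (Ft (y u)) (Ici u) u :=
    fun u _ => (hy u).hasDerivWithinAt
  have := dist_le_of_trajectories_ODE (v := fun _ z => Ft z) (fun _ => hL)
    hxc hxd hycont.continuousOn hyd (le_of_eq (by rw [add_zero])) s (right_mem_Icc.2 hs)
  simpa using this

end JQlemmas

open Topology in
/-- **Jurdjevic–Quinn stabilization theorem**: consider the control-affine system
`ẋ = f(x) + Σ uᵢ gᵢ(x)` with smooth vector fields, `f(x̄) = 0`, and a smooth proper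
Lyapunov function `V` for the uncontrolled system (positive definite at `x̄`,
`L_f V ≤ 0`) such that the set where `L_f V = 0` and all iterated Lie derivatives
`L_f^k L_{gᵢ} V` vanish is reduced to `{x̄}`. Then, with the feedback
`uᵢ(x) = −L_{gᵢ}V(x)`, the closed-loop vector field
`F(x) = f(x) − Σᵢ L_{gᵢ}V(x) gᵢ(x)` makes `x̄` globally asymptotically stable:
from every initial point there is a global solution, every global solution converges to
`x̄`, and the ε–δ stability property holds. -/
theorem jurdjevic_quinn {n m : ℕ}
    (f : (Fin n → ℝ) → Fin n → ℝ) (g : Fin m → (Fin n → ℝ) → Fin n → ℝ)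
    (hf : ContDiff ℝ (⊤ : ℕ∞) f) (hg : ∀ i, ContDiff ℝ (⊤ : ℕ∞) (g i))
    (xbar : Fin n → ℝ) (hxbar : f xbar = 0)
    (V : (Fin n → ℝ) → ℝ) (hV : ContDiff ℝ (⊤ : ℕ∞) V)
    (hV0 : V xbar = 0) (hVpos : ∀ x, x ≠ xbar → 0 < V x)
    (hVproper : ∀ K : Set ℝ, IsCompact K → IsCompact (V ⁻¹' K))
    (hLfV : ∀ x, lieD f V x ≤ 0)
    (hset : {x : Fin n → ℝ | lieD f V x = 0 ∧
        ∀ (i : Fin m) (k : ℕ), (lieD f)^[k] (lieD (g i) V) x = 0} = {xbar})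
    (F : (Fin n → ℝ) → Fin n → ℝ)
    (hF : ∀ x, F x = f x - ∑ i, lieD (g i) V x • g i x) :
    (∀ x₀ : Fin n → ℝ, ∃ x : ℝ → Fin n → ℝ, GlobalSol F x ∧ x 0 = x₀) ∧
    (∀ x : ℝ → Fin n → ℝ, GlobalSol F x → Tendsto x atTop (nhds xbar)) ∧
    (∀ ε > (0:ℝ), ∃ δ > (0:ℝ), ∀ x : ℝ → Fin n → ℝ, GlobalSol F x →
      ‖x 0 - xbar‖ ≤ δ → ∀ t ≥ (0:ℝ), ‖x t - xbar‖ ≤ ε) := by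
  classical
  have hVnonneg : ∀ y, 0 ≤ V y := by
    intro y; by_cases hy : y = xbar
    · rw [hy, hV0]
    · exact (hVpos y hy).le
  have hgi : ∀ i, ContDiff ℝ (⊤ : ℕ∞) (lieD (g i) V) := fun i => JQlieD_contDiff (hg i) hV
  have hFc : ContDiff ℝ (⊤ : ℕ∞) F := by
    have hFe : F = fun x => f x - ∑ i, lieD (g i) V x • g i x := funext hF
    rw [hFe]
    exact hf.sub (ContDiff.sum fun i _ => (hgi i).smul (hg i))
  have hFcont : Continuous F := hFc.continuous
  -- linearity of the differential along F
  have hlin : ∀ (W : (Fin n → ℝ) → ℝ) (z : Fin n → ℝ),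
      fderiv ℝ W z (F z) = lieD f W z - ∑ i, lieD (g i) V z * fderiv ℝ W z (g i z) := by
    intro W z
    rw [hF z, map_sub, map_sum]
    simp only [_root_.map_smul, smul_eq_mul]
    rfl
  have hFV : ∀ z, lieD F V z = lieD f V z - ∑ i, (lieD (g i) V z)^2 := by
    intro z
    show fderiv ℝ V z (F z) = _
    rw [hlin V z]
    congr 1
    refine Finset.sum_congr rfl fun i _ => ?_
    rw [pow_two]
    rfl
  have hLFV : ∀ z, fderiv ℝ V z (F z) ≤ 0 := by
    intro z
    have h0 : lieD F V z ≤ 0 := by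
      rw [hFV z]
      have h1 : 0 ≤ ∑ i, (lieD (g i) V z)^2 := Finset.sum_nonneg fun i _ => sq_nonneg _
      linarith [hLfV z]
    exact h0
  -- compact sublevel sets
  have hsub : ∀ c : ℝ, {y | V y ≤ c} = V ⁻¹' (Icc 0 c) := by
    intro c; ext y; simp [hVnonneg y]
  have hcomp : ∀ c : ℝ, IsCompact {y | V y ≤ c} := fun c => hsub c ▸ hVproper _ isCompact_Icc
  -- GlobalSols are dissipative
  have hstay : ∀ x : ℝ → Fin n → ℝ, GlobalSol F x → ∀ t ≥ (0:ℝ), V (x t) ≤ V (x 0) :=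
    fun x hx t ht =>
      JQantitone hV hx.1 (JQderivAt hFcont hx) hLFV self_mem_Ici ht ht
  -- cutoff fields
  have hcut : ∀ R : ℝ, 0 ≤ R → ∃ Ft : (Fin n → ℝ) → Fin n → ℝ,
      (∀ z ∈ Metric.closedBall (0 : Fin n → ℝ) R, Ft z = F z) ∧
      (∀ z, fderiv ℝ V z (Ft z) ≤ 0) ∧
      (∃ L : NNReal, LipschitzWith L Ft) ∧ (∃ C, ∀ z, ‖Ft z‖ ≤ C) := by
    intro R hR
    have hrin : (0:ℝ) < R+1 := by linarith
    have hlt : R+1 < R+2 := by linarith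
    let χ : ContDiffBump (0 : Fin n → ℝ) := ⟨R+1, R+2, hrin, hlt⟩
    have hχIn : χ.rIn = R+1 := rfl
    have hcd : ContDiff ℝ 1 (fun z => χ z • F z) := χ.contDiff.smul (hFc.of_le (by simp))
    have hsupp : HasCompactSupport (fun z => χ z • F z) := χ.hasCompactSupport.smul_right
    refine ⟨fun z => χ z • F z, ?_, ?_, ?_, ?_⟩
    · intro z hz
      show χ z • F z = F z
      rw [χ.one_of_mem_closedBall
        (Metric.closedBall_subset_closedBall (by rw [hχIn]; linarith) hz), one_smul]
    · intro z
      show (fderiv ℝ V z) (χ z • F z) ≤ 0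
      have h1 : (fderiv ℝ V z) (F z) ≤ 0 := hLFV z
      have h2 : (0:ℝ) ≤ χ z := χ.nonneg
      have h3 : (fderiv ℝ V z) (χ z • F z) = χ z * (fderiv ℝ V z) (F z) := by
        rw [ContinuousLinearMap.map_smul]
        rfl
      rw [h3]
      nlinarith [mul_nonneg h2 (neg_nonneg.2 h1)]
    · exact ContDiff.lipschitzWith_of_hasCompactSupport hsupp hcd one_ne_zero
    · exact hcd.continuous.bounded_above_of_compact_support hsupp
  -- common machinery for solutions of the cutoff field
  have hkey : ∀ (c R : ℝ) (Ft : (Fin n → ℝ) → Fin n → ℝ),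
      (∀ z ∈ Metric.closedBall (0 : Fin n → ℝ) R, Ft z = F z) →
      (∀ z, fderiv ℝ V z (Ft z) ≤ 0) →
      ({y | V y ≤ c} ⊆ Metric.closedBall (0 : Fin n → ℝ) R) →
      ∀ y : ℝ → Fin n → ℝ, (∀ t, HasDerivAt y (Ft (y t)) t) → V (y 0) ≤ c →
      (∀ t ≥ (0:ℝ), V (y t) ≤ V (y 0)) ∧ (∀ t ≥ (0:ℝ), Ft (y t) = F (y t)) ∧ GlobalSol F y := by
    intro c R Ft hFt1 hFt2 hRc y hyD hyc
    have hycont : Continuous y := continuous_iff_continuousAt.2 fun t => (hyD t).continuousAt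
    have hmono : ∀ t ≥ (0:ℝ), V (y t) ≤ V (y 0) := fun t ht =>
      JQantitone hV hycont.continuousOn (fun t _ => hyD t) hFt2 self_mem_Ici ht ht
    have hFt : ∀ t ≥ (0:ℝ), Ft (y t) = F (y t) := fun t ht =>
      hFt1 _ (hRc (le_trans (hmono t ht) hyc))
    exact ⟨hmono, hFt, JQtoGlobalSol hFcont hycont (fun t ht => hFt t ht ▸ hyD t)⟩
  -- Part 1 : existence
  have hpart1 : ∀ x₀ : Fin n → ℝ, ∃ x : ℝ → Fin n → ℝ, GlobalSol F x ∧ x 0 = x₀ := by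
    intro x₀
    obtain ⟨r, hr⟩ := (hcomp (V x₀)).isBounded.subset_closedBall 0
    have hRc : {y | V y ≤ V x₀} ⊆ Metric.closedBall (0 : Fin n → ℝ) (max r 0) :=
      hr.trans (Metric.closedBall_subset_closedBall (le_max_left _ _))
    obtain ⟨Ft, hFt1, hFt2, ⟨L, hL⟩, ⟨C, hC⟩⟩ := hcut (max r 0) (le_max_right _ _)
    obtain ⟨y, hy0, hyD⟩ := JQglobal_exist hL hC x₀
    obtain ⟨-, -, hyG⟩ := hkey (V x₀) (max r 0) Ft hFt1 hFt2 hRc y hyD (le_of_eq (by rw [hy0]))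
    exact ⟨y, hyG, hy0⟩
  -- Part 2 : convergence (LaSalle)
  have hconv : ∀ x : ℝ → Fin n → ℝ, GlobalSol F x → Tendsto x atTop (𝓝 xbar) := by
    intro x hx
    set c₀ := V (x 0) with hc₀
    obtain ⟨r, hr⟩ := (hcomp c₀).isBounded.subset_closedBall 0
    have hRc : {y | V y ≤ c₀} ⊆ Metric.closedBall (0 : Fin n → ℝ) (max r 0) :=
      hr.trans (Metric.closedBall_subset_closedBall (le_max_left _ _))
    obtain ⟨Ft, hFt1, hFt2, ⟨L, hL⟩, ⟨C, hC⟩⟩ := hcut (max r 0) (le_max_right _ _)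
    have hxK : ∀ t ≥ (0:ℝ), V (x t) ≤ c₀ := hstay x hx
    have hxFt : ∀ t ≥ (0:ℝ), Ft (x t) = F (x t) := fun t ht => hFt1 _ (hRc (hxK t ht))
    have hw : AntitoneOn (fun t => V (x t)) (Ici 0) :=
      JQantitone hV hx.1 (JQderivAt hFcont hx) hLFV
    set w : ℝ → ℝ := fun t => V (x (max t 0)) with hwdef
    have hwanti : Antitone w := fun s t hst =>
      hw (mem_Ici.2 (le_max_right _ _)) (mem_Ici.2 (le_max_right _ _)) (max_le_max hst le_rfl)
    have hwbdd : BddBelow (range w) := ⟨0, by rintro v ⟨t, rfl⟩; exact hVnonneg _⟩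
    set c := ⨅ t, w t with hcdef
    have hwc : Tendsto w atTop (𝓝 c) := tendsto_atTop_ciInf hwanti hwbdd
    have hVx : Tendsto (fun t => V (x t)) atTop (𝓝 c) := by
      refine hwc.congr' ?_
      filter_upwards [eventually_ge_atTop (0:ℝ)] with t ht
      rw [hwdef]
      simp [max_eq_left ht]
    have hc_le : c ≤ c₀ := by
      have h0 := ciInf_le hwbdd 0
      simpa [hwdef] using h0
    -- every large-time limit point is xbar
    have hKEY : ∀ p : Fin n → ℝ, ∀ u : ℕ → ℝ, (∀ k, 0 ≤ u k) → Tendsto u atTop atTop →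
        Tendsto (fun k => x (u k)) atTop (𝓝 p) → p = xbar := by
      intro p u hu0 hutop hxu
      have hVp : V p = c :=
        tendsto_nhds_unique ((hV.continuous.continuousAt.tendsto).comp hxu) (hVx.comp hutop)
      obtain ⟨y, hy0, hyD⟩ := JQglobal_exist hL hC p
      have hyc : V (y 0) ≤ c₀ := by rw [hy0, hVp]; exact hc_le
      obtain ⟨hymono, hyFt, hyG⟩ := hkey c₀ (max r 0) Ft hFt1 hFt2 hRc y hyD hyc
      have hbridge : ∀ s ≥ (0:ℝ), Tendsto (fun k => x (u k + s)) atTop (𝓝 (y s)) := by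
        intro s hs
        have hd : ∀ k, dist (x (u k + s)) (y s) ≤ dist (x (u k)) p * Real.exp (L * s) := by
          intro k
          have := JQgronwall hL hFcont hx hxFt hyD (hu0 k) hs
          rwa [hy0] at this
        have h0 : Tendsto (fun k => dist (x (u k)) p * Real.exp (L * s)) atTop (𝓝 0) := by
          have h1 : Tendsto (fun k => dist (x (u k)) p) atTop (𝓝 0) :=
            tendsto_iff_dist_tendsto_zero.1 hxu
          simpa using h1.mul_const (Real.exp (L * s))
        exact tendsto_iff_dist_tendsto_zero.2 (squeeze_zero (fun k => dist_nonneg) hd h0)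
      have hyVc : ∀ s ≥ (0:ℝ), V (y s) = c := by
        intro s hs
        have h1 : Tendsto (fun k => V (x (u k + s))) atTop (𝓝 (V (y s))) :=
          (hV.continuous.continuousAt.tendsto).comp (hbridge s hs)
        have h2 : Tendsto (fun k => V (x (u k + s))) atTop (𝓝 c) :=
          hVx.comp (tendsto_atTop_add_const_right _ s hutop)
        exact tendsto_nhds_unique h1 h2
      -- derivative of conserved quantities along y vanishes
      have hfd : ∀ (W : (Fin n → ℝ) → ℝ), ContDiff ℝ (⊤ : ℕ∞) W → ∀ (c' : ℝ),
          (∀ s ≥ (0:ℝ), W (y s) = c') → ∀ s ≥ (0:ℝ), fderiv ℝ W (y s) (F (y s)) = 0 := by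
        intro W hW c' hconst s hs
        have hA : HasDerivWithinAt (W ∘ y) (fderiv ℝ W (y s) (F (y s))) (Ici s) s := by
          have h1 := ((hW.differentiable (by simp) (y s)).hasFDerivAt).comp_hasDerivAt s (hyD s)
          rw [hyFt s hs] at h1
          exact h1.hasDerivWithinAt
        have hB : HasDerivWithinAt (W ∘ y) 0 (Ici s) s := by
          have hcst : ∀ r ∈ Ici s, (W ∘ y) r = c' := fun r hr => hconst r (le_trans hs hr)
          exact (hasDerivWithinAt_const s (Ici s) c').congr hcst (hcst s self_mem_Ici)
        exact (uniqueDiffOn_Ici s s self_mem_Ici).eq_deriv _ hA hB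
      have hsplit : ∀ s ≥ (0:ℝ), lieD f V (y s) = 0 ∧ ∀ i, lieD (g i) V (y s) = 0 := by
        intro s hs
        have h0 : fderiv ℝ V (y s) (F (y s)) = 0 := hfd V hV c hyVc s hs
        have h1 : lieD f V (y s) - ∑ i, (lieD (g i) V (y s))^2 = 0 := by
          rw [← hFV (y s)]
          exact h0
        have h2 : 0 ≤ ∑ i, (lieD (g i) V (y s))^2 := Finset.sum_nonneg fun i _ => sq_nonneg _
        have h3 : lieD f V (y s) = 0 := le_antisymm (hLfV _) (by linarith)
        have h4 : ∑ i, (lieD (g i) V (y s))^2 = 0 := by linarith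
        refine ⟨h3, fun i => ?_⟩
        have h5 := (Finset.sum_eq_zero_iff_of_nonneg (fun i _ => sq_nonneg _)).1 h4 i
          (Finset.mem_univ i)
        exact pow_eq_zero_iff (two_ne_zero) |>.1 h5
      have hiter : ∀ (i : Fin m) (k : ℕ), ∀ s ≥ (0:ℝ), (lieD f)^[k] (lieD (g i) V) (y s) = 0 := by
        intro i k
        induction k with
        | zero => exact fun s hs => (hsplit s hs).2 i
        | succ k ih =>
          intro s hs
          have hWk : ContDiff ℝ (⊤ : ℕ∞) ((lieD f)^[k] (lieD (g i) V)) := JQiter_contDiff hf (hgi i) k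
          have h0 := hfd _ hWk 0 ih s hs
          have h1 : fderiv ℝ ((lieD f)^[k] (lieD (g i) V)) (y s) (F (y s))
              = lieD f ((lieD f)^[k] (lieD (g i) V)) (y s) := by
            rw [hlin]
            have hz : ∀ i', lieD (g i') V (y s) = 0 := (hsplit s hs).2
            simp [hz]
          rw [Function.iterate_succ_apply', ← h1]
          exact h0
      have hpmem : p ∈ ({z : Fin n → ℝ | lieD f V z = 0 ∧
          ∀ (i : Fin m) (k : ℕ), (lieD f)^[k] (lieD (g i) V) z = 0}) := by
        constructor
        · have h6 := (hsplit 0 le_rfl).1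
          rwa [hy0] at h6
        · intro i k
          have h6 := hiter i k 0 le_rfl
          rwa [hy0] at h6
      have h7 : p ∈ ({xbar} : Set (Fin n → ℝ)) := hset ▸ hpmem
      simpa using h7
    -- conclude convergence by compactness
    rw [Metric.tendsto_atTop]
    by_contra hcon
    push_neg at hcon
    obtain ⟨ε, hε, hfreq⟩ := hcon
    choose u hu1 hu2 using fun k : ℕ => hfreq (k : ℝ)
    have hu0 : ∀ k, 0 ≤ u k := fun k => le_trans (Nat.cast_nonneg k) (hu1 k)
    have hxuK : ∀ k, x (u k) ∈ {y | V y ≤ c₀} := fun k => hxK (u k) (hu0 k)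
    obtain ⟨p, hpK, φ, hφ, hxup⟩ := (hcomp c₀).tendsto_subseq hxuK
    have hutop : Tendsto (fun k => u (φ k)) atTop atTop := by
      refine tendsto_atTop_mono (fun k => ?_) tendsto_natCast_atTop_atTop
      exact le_trans (Nat.cast_le.2 (hφ.le_apply)) (hu1 (φ k))
    have hp := hKEY p (fun k => u (φ k)) (fun k => hu0 _) hutop hxup
    have hdist : ε ≤ dist p xbar := by
      refine ge_of_tendsto (hxup.dist (tendsto_const_nhds : Tendsto (fun _ : ℕ => xbar) _ _)) ?_
      exact Eventually.of_forall fun k => hu2 (φ k)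
    rw [hp, dist_self] at hdist
    linarith
  -- small sublevel sets are small balls
  have hL1 : ∀ ε > (0:ℝ), ∃ c > (0:ℝ), ∀ y, V y ≤ c → dist y xbar ≤ ε := by
    intro ε hε
    by_contra hcon
    push_neg at hcon
    choose Y hY1 hY2 using fun k : ℕ => hcon (1/(k+1)) (by positivity)
    have hYK : ∀ k, Y k ∈ {y | V y ≤ 1} := by
      intro k
      have h1 : (1:ℝ)/(k+1) ≤ 1 := by
        rw [div_le_one (by positivity)]
        linarith [Nat.cast_nonneg (α := ℝ) k]
      exact le_trans (hY1 k) h1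
    obtain ⟨a, haK, φ, hφ, hYa⟩ := (hcomp 1).tendsto_subseq hYK
    have hVa : V a ≤ 0 := by
      have h1 : Tendsto (fun k => V (Y (φ k))) atTop (𝓝 (V a)) :=
        (hV.continuous.continuousAt.tendsto).comp hYa
      have h2 : Tendsto (fun k : ℕ => (1:ℝ)/(k+1)) atTop (𝓝 0) :=
        tendsto_one_div_add_atTop_nhds_zero_nat
      refine le_of_tendsto_of_tendsto h1 h2 ?_
      refine Eventually.of_forall fun k => ?_
      calc V (Y (φ k)) ≤ 1/(φ k + 1) := hY1 _
        _ ≤ 1/(k+1) := by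
            gcongr
            exact_mod_cast hφ.le_apply
    have ha : a = xbar := by
      by_contra h
      exact absurd hVa (not_le.2 (hVpos a h))
    have hda : ε ≤ dist a xbar :=
      ge_of_tendsto (hYa.dist (tendsto_const_nhds : Tendsto (fun _ : ℕ => xbar) _ _))
        (Eventually.of_forall fun k => (hY2 (φ k)).le)
    rw [ha, dist_self] at hda
    linarith
  refine ⟨hpart1, hconv, ?_⟩
  -- Part 3 : stability
  intro ε hε
  obtain ⟨c, hc, hcsub⟩ := hL1 ε hε
  obtain ⟨δ, hδ, hδc⟩ := Metric.continuousAt_iff.1 hV.continuous.continuousAt c hc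
  refine ⟨δ/2, by positivity, ?_⟩
  intro x hx hx0 t ht
  have hVx0 : V (x 0) ≤ c := by
    have h1 : dist (x 0) xbar < δ := by
      rw [dist_eq_norm]
      linarith
    have h2 := hδc h1
    rw [hV0, dist_zero_right, Real.norm_eq_abs] at h2
    exact le_of_lt (lt_of_le_of_lt (le_abs_self _) h2)
  have hVt : V (x t) ≤ c := le_trans (hstay x hx t ht) hVx0
  have := hcsub _ hVt
  rwa [dist_eq_norm] at this
end

section
/- Uniform lower bound for integrals of squared sine eigenfunctions over a measurable set: Let L > 0 and let ω be a Lebesgue-measurable subset of (0,L) with Lebesgue measure |ω|. Then for every integer j ≥ 1, ∫_ω sin²(jπx/L) dx ≥ (1/2)·( |ω| − (L/π)·sin(π|ω|/L) ). Moreover, this bound does not depend on j. -/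
open MeasureTheory Set

/-- **Uniform lower bound for integrals of squared sine eigenfunctions over a measurable
set**: for every `L > 0`, every Lebesgue-measurable `ω ⊆ (0,L)` and every integer
`j ≥ 1`, one has `∫_ω sin²(jπx/L) dx ≥ (1/2)(|ω| − (L/π) sin(π|ω|/L))`; in particular
the bound does not depend on `j`. -/
theorem sine_integral_lower_bound (L : ℝ) (hL : 0 < L)
    (ω : Set ℝ) (hmeas : MeasurableSet ω) (hω : ω ⊆ Set.Ioo 0 L)
    (j : ℕ) (hj : 1 ≤ j) :
    (1 / 2) * ((volume ω).toReal -
        (L / Real.pi) * Real.sin (Real.pi * (volume ω).toReal / L)) ≤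
      ∫ x in ω, (Real.sin ((j : ℝ) * Real.pi * x / L)) ^ 2 := by
  have hπ : (0:ℝ) < Real.pi := Real.pi_pos
  set m : ℝ := (volume ω).toReal with hm
  set θ : ℝ := Real.pi * m / L with hθ
  set t : ℝ := Real.cos θ with ht
  set c : ℝ := 2 * j * Real.pi / L with hc
  have hj0 : (0:ℝ) < j := by exact_mod_cast hj
  have hc0 : 0 < c := by positivity
  -- measure facts
  have hfin : volume ω ≠ ⊤ := by
    have h1 : volume ω ≤ volume (Ioo 0 L) := measure_mono hω
    exact ne_top_of_le_ne_top (by simp [Real.volume_Ioo]) h1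
  have hm0 : 0 ≤ m := ENNReal.toReal_nonneg
  have hmL : m ≤ L := by
    have this : volume ω ≤ volume (Ioo 0 L) := measure_mono hω
    rw [Real.volume_Ioo] at this
    have := ENNReal.toReal_mono (by simp) this
    simpa [hm, ENNReal.toReal_ofReal hL.le] using this
  have hθ0 : 0 ≤ θ := by positivity
  have hθπ : θ ≤ Real.pi := by
    rw [hθ, div_le_iff₀ hL]
    nlinarith
  -- the positive part function
  set g : ℝ → ℝ := fun u => max (Real.cos u - t) 0 with hg
  have hgcont : Continuous g := by fun_prop
  have hgper : Function.Periodic g (2 * Real.pi) := fun x => by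
    simp [hg, Real.cos_add_two_pi]
  -- integrability
  have hcos_int : IntegrableOn (fun x => Real.cos (c * x)) ω volume := by
    have : IntegrableOn (fun x => Real.cos (c * x)) (Icc 0 L) volume :=
      (Continuous.continuousOn (by fun_prop)).integrableOn_Icc
    exact this.mono_set (hω.trans Set.Ioo_subset_Icc_self)
  have hgIoo : IntegrableOn (fun x => g (c * x)) (Ioo 0 L) volume := by
    have : IntegrableOn (fun x => g (c * x)) (Icc 0 L) volume :=
      (Continuous.continuousOn (by fun_prop)).integrableOn_Icc
    exact this.mono_set Set.Ioo_subset_Icc_self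
  have hg_int : IntegrableOn (fun x => g (c * x)) ω volume := hgIoo.mono_set hω
  -- Step 1: rewrite sin² via double angle
  have hsin_eq : ∀ x : ℝ, (Real.sin ((j : ℝ) * Real.pi * x / L)) ^ 2
      = 1/2 - Real.cos (c * x) / 2 := by
    intro x
    have h2 : 2 * ((j : ℝ) * Real.pi * x / L) = c * x := by
      rw [hc]; ring
    rw [Real.sin_sq, Real.cos_sq, h2]
    ring
  have hstep1 : ∫ x in ω, (Real.sin ((j : ℝ) * Real.pi * x / L)) ^ 2
      = m / 2 - (1/2) * ∫ x in ω, Real.cos (c * x) := by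
    simp only [hsin_eq]
    rw [integral_sub (integrableOn_const (C := (1/2:ℝ)) hfin) (hcos_int.div_const 2),
      setIntegral_const, integral_div]
    simp [hm, Measure.real]
    ring
  -- Step 2: pointwise bound cos ≤ t + g
  have hstep2 : ∫ x in ω, Real.cos (c * x) ≤ t * m + ∫ x in Ioo 0 L, g (c * x) := by
    have h1 : ∫ x in ω, Real.cos (c * x) ≤ ∫ x in ω, (t + g (c * x)) := by
      refine setIntegral_mono_on hcos_int
        ((integrableOn_const hfin).add hg_int) hmeas ?_
      intro x _
      have : Real.cos (c * x) - t ≤ g (c * x) := le_max_left _ _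
      linarith
    have h2 : ∫ x in ω, (t + g (c * x)) = t * m + ∫ x in ω, g (c * x) := by
      rw [integral_add (integrableOn_const (C := t) hfin) hg_int,
        setIntegral_const]
      simp [hm, mul_comm, Measure.real]
    have h3 : ∫ x in ω, g (c * x) ≤ ∫ x in Ioo 0 L, g (c * x) := by
      refine setIntegral_mono_set hgIoo ?_ (Filter.Eventually.of_forall hω)
      exact Filter.Eventually.of_forall fun x => le_max_right _ _
    linarith
  -- Step 3: compute ∫ over (0,L) of g(cx)
  have hcL : c * L = (j : ℤ) • (2 * Real.pi) := by
    rw [hc, zsmul_eq_mul, div_mul_cancel₀ _ hL.ne']; push_cast; ring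
  have hgInt : ∀ t₁ t₂ : ℝ, IntervalIntegrable g volume t₁ t₂ := fun t₁ t₂ =>
    hgcont.intervalIntegrable t₁ t₂
  have hone : ∫ u in (0:ℝ)..(2 * Real.pi), g u = 2 * (Real.sin θ - t * θ) := by
    have hsplit1 : ∫ u in (0:ℝ)..θ, g u = Real.sin θ - t * θ := by
      have : ∀ u ∈ Set.uIcc (0:ℝ) θ, g u = Real.cos u - t := by
        intro u hu
        rw [Set.uIcc_of_le hθ0] at hu
        have : t ≤ Real.cos u :=
          Real.cos_le_cos_of_nonneg_of_le_pi hu.1 hθπ hu.2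
        simp [hg, max_eq_left, sub_nonneg.2 this]
      rw [intervalIntegral.integral_congr this,
        intervalIntegral.integral_sub (intervalIntegral.intervalIntegrable_cos)
          intervalIntegrable_const]
      simp [mul_comm]
    have hsplit2 : ∫ u in θ..(2 * Real.pi - θ), g u = 0 := by
      have hle : θ ≤ 2 * Real.pi - θ := by linarith
      have : ∀ u ∈ Set.uIcc θ (2 * Real.pi - θ), g u = 0 := by
        intro u hu
        rw [Set.uIcc_of_le hle] at hu
        have hcu : Real.cos u ≤ t := by
          rcases le_or_gt u Real.pi with h | h
          · exact Real.cos_le_cos_of_nonneg_of_le_pi hθ0 h hu.1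
          · have heq : Real.cos u = Real.cos (2 * Real.pi - u) := by
              rw [show (2 * Real.pi - u) = -(u - 2 * Real.pi) by ring,
                Real.cos_neg, Real.cos_sub_two_pi]
            rw [heq]
            exact Real.cos_le_cos_of_nonneg_of_le_pi hθ0 (by linarith) (by linarith [hu.2])
        simp [hg, max_eq_right, sub_nonpos.2 hcu]
      rw [intervalIntegral.integral_congr this]
      simp
    have hsplit3 : ∫ u in (2 * Real.pi - θ)..(2 * Real.pi), g u = Real.sin θ - t * θ := by
      have hle : 2 * Real.pi - θ ≤ 2 * Real.pi := by linarith
      have : ∀ u ∈ Set.uIcc (2 * Real.pi - θ) (2 * Real.pi), g u = Real.cos u - t := by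
        intro u hu
        rw [Set.uIcc_of_le hle] at hu
        have heq : Real.cos u = Real.cos (2 * Real.pi - u) := by
          rw [show (2 * Real.pi - u) = -(u - 2 * Real.pi) by ring,
            Real.cos_neg, Real.cos_sub_two_pi]
        have : t ≤ Real.cos u := by
          rw [heq]
          exact Real.cos_le_cos_of_nonneg_of_le_pi (by linarith [hu.2]) hθπ (by linarith [hu.1])
        simp [hg, max_eq_left, sub_nonneg.2 this]
      rw [intervalIntegral.integral_congr this,
        intervalIntegral.integral_sub (intervalIntegral.intervalIntegrable_cos)
          intervalIntegrable_const]
      have : Real.sin (2 * Real.pi) - Real.sin (2 * Real.pi - θ) = Real.sin θ := by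
        rw [Real.sin_two_pi, show (2 * Real.pi - θ) = -(θ - 2 * Real.pi) by ring,
          Real.sin_neg, Real.sin_sub_two_pi]
        ring
      rw [integral_cos, this, intervalIntegral.integral_const,
        smul_eq_mul]
      ring
    rw [← intervalIntegral.integral_add_adjacent_intervals (hgInt 0 θ) (hgInt θ (2*Real.pi)),
      ← intervalIntegral.integral_add_adjacent_intervals (hgInt θ (2*Real.pi - θ))
        (hgInt (2*Real.pi - θ) (2*Real.pi)),
      hsplit1, hsplit2, hsplit3]
    ring
  have hstep3 : ∫ x in Ioo 0 L, g (c * x) = (L / Real.pi) * (Real.sin θ - t * θ) := by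
    rw [← MeasureTheory.integral_Ioc_eq_integral_Ioo,
      ← intervalIntegral.integral_of_le hL.le,
      intervalIntegral.integral_comp_mul_left g (ne_of_gt hc0)]
    rw [mul_zero, hcL, show ((j:ℤ) • (2 * Real.pi)) = (0:ℝ) + (j:ℤ) • (2 * Real.pi) by ring,
      hgper.intervalIntegral_add_zsmul_eq (j : ℤ) 0 hgInt]
    rw [zero_add, hone]
    have : ((j:ℤ) : ℝ) = (j:ℝ) := by norm_num
    rw [smul_eq_mul, zsmul_eq_mul, this]
    rw [hc]
    field_simp
  -- Combine
  have hkey : t * m = (L / Real.pi) * (t * θ) := by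
    rw [hθ]
    field_simp
  rw [hstep1]
  have hsinθ : Real.sin (Real.pi * m / L) = Real.sin θ := by rw [hθ]
  rw [hsinθ]
  nlinarith [hstep2, hstep3.symm.le, hstep3.le]
end
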